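/- arXiv:1303.4917 — 6 statements merged into one kernel-verified Lean document; each statement's English description precedes it below -/
import Mathlib

section
/- Let τ ∈ [0,1], c ∈ ℝ, let (d_n) be a sequence of positive reals and (h_n) a sequence of reals such that n·h_n/d_n → c as n → ∞. For each n define μ_i^{(n)} = 0 for 1 ≤ i ≤ ⌊nτ⌋ and μ_i^{(n)} = h_n for ⌊nτ⌋ < i ≤ n. Then sup_{λ∈[0,1]} | (1/(n·d_n)) · Σ_{i=1}^{⌊nλ⌋} Σ_{j=⌊nλ⌋+1}^{n} (μ_j^{(n)} − μ_i^{(n)}) − c·φ_τ(λ) | → 0 as n → ∞. -/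
/-!
Write `m = ⌊nλ⌋` and `k = ⌊nτ⌋`. Only the pairs `i ≤ k < j` contribute, so the double sum is
`min m k * (n - max m k) * h_n`, and the normalised drift is `(n h_n / d_n) * tent (m/n) (k/n)`
with the symmetric function `tent x y = min x y * (1 - max x y)`, for which `φ_τ(λ) = tent λ τ`.
On the unit square `tent` is bounded by `1` and `2`-Lipschitz for the sup-distance, while `m/n`
and `k/n` are within `1/n` of `λ` and `τ`; hence the error is at most
`|n h_n / d_n - c| + 2 |c| / n`, uniformly in `λ`.
-/

open Filter Finset Topology

lemma sum_Icc_sum_Icc_sub_step {R : Type*} [Ring R] (m n k : ℕ) (x : R) :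
    ∑ i ∈ Icc 1 m, ∑ j ∈ Icc (m + 1) n,
      ((if j ≤ k then 0 else x) - (if i ≤ k then 0 else x)) =
      (min m k * (n - max m k) : ℕ) • x := by
  rcases le_or_gt m k with hmk | hkm
  · have hfilter : {j ∈ Icc (m + 1) n | ¬ j ≤ k} = Icc (k + 1) n := by
      ext j; simp only [mem_filter, mem_Icc]; omega
    calc _ = ∑ i ∈ Icc 1 m, ∑ j ∈ Icc (m + 1) n, (if j ≤ k then 0 else x) := by
          refine sum_congr rfl fun i hi => sum_congr rfl fun j _ => ?_
          rw [if_pos ((mem_Icc.1 hi).2.trans hmk), sub_zero]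
      _ = _ := by
          rw [sum_const, sum_ite, sum_const_zero, zero_add, sum_const, hfilter, Nat.card_Icc,
            Nat.card_Icc, smul_smul, min_eq_left hmk, max_eq_right hmk, Nat.add_sub_cancel,
            Nat.add_sub_add_right]
  · have hfilter : {i ∈ Icc 1 m | i ≤ k} = Icc 1 k := by
      ext i; simp only [mem_filter, mem_Icc]; omega
    calc _ = ∑ i ∈ Icc 1 m, ∑ j ∈ Icc (m + 1) n, (if i ≤ k then x else 0) := by
          refine sum_congr rfl fun i _ => sum_congr rfl fun j hj => ?_
          rw [if_neg (by simp only [mem_Icc] at hj; omega)]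
          split_ifs <;> simp
      _ = _ := by
          rw [sum_congr rfl fun i _ => sum_const _, ← smul_sum, sum_ite, sum_const_zero, add_zero,
            sum_const, hfilter, Nat.card_Icc, Nat.card_Icc, smul_smul, min_eq_right hkm.le,
            max_eq_left hkm.le, Nat.add_sub_cancel, Nat.add_sub_add_right, mul_comm]

def tent (x y : ℝ) : ℝ := min x y * (1 - max x y)

lemma tent_eq_ite (l τ : ℝ) : tent l τ = if l ≤ τ then l * (1 - τ) else (1 - l) * τ := by
  unfold tent
  split_ifs with h
  · rw [min_eq_left h, max_eq_right h]
  · rw [min_eq_right (le_of_not_ge h), max_eq_left (le_of_not_ge h), mul_comm]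

lemma abs_min_le_one_of_mem_Icc {x y : ℝ} (hx : x ∈ Set.Icc (0 : ℝ) 1)
    (hy : y ∈ Set.Icc (0 : ℝ) 1) : |min x y| ≤ 1 :=
  abs_le.2 ⟨by linarith [le_min hx.1 hy.1], (min_le_left _ _).trans hx.2⟩

lemma abs_one_sub_max_le_one_of_mem_Icc {x y : ℝ} (hx : x ∈ Set.Icc (0 : ℝ) 1)
    (hy : y ∈ Set.Icc (0 : ℝ) 1) : |1 - max x y| ≤ 1 :=
  abs_le.2 ⟨by linarith [max_le hx.2 hy.2], by linarith [hx.1, le_max_left x y]⟩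

lemma abs_tent_le_one {x y : ℝ} (hx : x ∈ Set.Icc (0 : ℝ) 1) (hy : y ∈ Set.Icc (0 : ℝ) 1) :
    |tent x y| ≤ 1 := by
  rw [tent, abs_mul]
  exact mul_le_one₀ (abs_min_le_one_of_mem_Icc hx hy) (abs_nonneg _)
    (abs_one_sub_max_le_one_of_mem_Icc hx hy)

lemma abs_mul_sub_mul_le {α : Type*} [Ring α] [LinearOrder α] [IsStrictOrderedRing α]
    {a c p q : α} (hp : |p| ≤ 1) : |a * p - c * q| ≤ |a - c| + |c| * |p - q| :=
  calc |a * p - c * q| = |(a - c) * p + c * (p - q)| := by noncomm_ring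
    _ ≤ |a - c| * |p| + |c| * |p - q| := by rw [← abs_mul, ← abs_mul]; exact abs_add_le _ _
    _ ≤ |a - c| + |c| * |p - q| := by gcongr; exact mul_le_of_le_one_right (abs_nonneg _) hp

lemma abs_tent_sub_tent_le {x y x' y' : ℝ} (hx : x ∈ Set.Icc (0 : ℝ) 1)
    (hy : y ∈ Set.Icc (0 : ℝ) 1) (hx' : x' ∈ Set.Icc (0 : ℝ) 1) (hy' : y' ∈ Set.Icc (0 : ℝ) 1) :
    |tent x y - tent x' y'| ≤ 2 * max |x - x'| |y - y'| :=
  calc |tent x y - tent x' y'|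
      = |(1 - max x y) * min x y - (1 - max x' y') * min x' y'| := by simp only [tent, mul_comm]
    _ ≤ |(1 - max x y) - (1 - max x' y')| + |1 - max x' y'| * |min x y - min x' y'| :=
        abs_mul_sub_mul_le (abs_min_le_one_of_mem_Icc hx hy)
    _ ≤ max |x - x'| |y - y'| + 1 * max |x - x'| |y - y'| := by
        gcongr
        · rw [sub_sub_sub_cancel_left, abs_sub_comm]; exact abs_max_sub_max_le_max _ _ _ _
        · exact abs_one_sub_max_le_one_of_mem_Icc hx' hy'
        · exact abs_min_sub_min_le_max _ _ _ _
    _ = 2 * max |x - x'| |y - y'| := by ring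

lemma natFloor_mul_le_of_le_one (n : ℕ) {x : ℝ} (hx : x ≤ 1) : ⌊(n : ℝ) * x⌋₊ ≤ n :=
  Nat.floor_le_of_le (mul_le_of_le_one_right n.cast_nonneg hx)

lemma natFloor_mul_div_mem_Icc (n : ℕ) {x : ℝ} (hx : x ∈ Set.Icc (0 : ℝ) 1) :
    ⌊(n : ℝ) * x⌋₊ / (n : ℝ) ∈ Set.Icc (0 : ℝ) 1 :=
  ⟨by positivity,
    div_le_one_of_le₀ (by exact_mod_cast natFloor_mul_le_of_le_one n hx.2) n.cast_nonneg⟩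

lemma abs_natFloor_mul_div_sub_le {n : ℕ} (hn : n ≠ 0) {x : ℝ} (hx : 0 ≤ x) :
    |⌊(n : ℝ) * x⌋₊ / (n : ℝ) - x| ≤ 1 / n := by
  have hn' : (0 : ℝ) < n := by positivity
  rw [le_div_iff₀ hn', ← abs_of_pos hn', ← abs_mul, abs_of_pos hn', sub_mul,
    div_mul_cancel₀ _ hn'.ne', abs_sub_comm, mul_comm]
  exact Nat.abs_sub_floor_le (by positivity)

lemma div_mul_sum_Icc_sum_Icc_sub_step {n m k : ℕ} (hm : m ≤ n) (hk : k ≤ n) (d x : ℝ) :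
    1 / (n * d) * ∑ i ∈ Icc 1 m, ∑ j ∈ Icc (m + 1) n,
      ((if j ≤ k then 0 else x) - (if i ≤ k then 0 else x)) =
      n * x / d * tent (m / n) (k / n) := by
  rcases eq_or_ne n 0 with rfl | hn
  · simp
  have hn' : (0 : ℝ) < n := by positivity
  rw [sum_Icc_sum_Icc_sub_step, tent, min_div_div_right hn'.le, max_div_div_right hn'.le,
    nsmul_eq_mul, Nat.cast_mul, Nat.cast_sub (max_le hm hk), ← Nat.cast_min, ← Nat.cast_max]
  field_simp

lemma tendstoUniformlyOn_of_dist_le {α β ι : Type*} [PseudoMetricSpace β] {l : Filter ι}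
    {F : ι → α → β} {f : α → β} {s : Set α} {e : ι → ℝ} (he : Tendsto e l (𝓝 0))
    (hFf : ∀ᶠ n in l, ∀ x ∈ s, dist (f x) (F n x) ≤ e n) : TendstoUniformlyOn F f l s := by
  rw [Metric.tendstoUniformlyOn_iff]
  intro ε hε
  filter_upwards [hFf, he.eventually (gt_mem_nhds hε)] with n hn hen x hx
  exact (hn x hx).trans_lt hen

theorem stmt0_general (τ : ℝ) (hτ : τ ∈ Set.Icc (0:ℝ) 1) (c : ℝ) (d h : ℕ → ℝ)
    (hc : Tendsto (fun n : ℕ => (n : ℝ) * h n / d n) atTop (nhds c)) :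
    TendstoUniformlyOn
      (fun (n : ℕ) (l : ℝ) =>
        (1 / ((n : ℝ) * d n)) *
          ∑ i ∈ Finset.Icc 1 ⌊(n : ℝ) * l⌋₊, ∑ j ∈ Finset.Icc (⌊(n : ℝ) * l⌋₊ + 1) n,
            ((if j ≤ ⌊(n : ℝ) * τ⌋₊ then (0:ℝ) else h n)
              - (if i ≤ ⌊(n : ℝ) * τ⌋₊ then (0:ℝ) else h n)))
      (fun l => c * (if l ≤ τ then l * (1 - τ) else (1 - l) * τ))
      atTop (Set.Icc 0 1) := by
  have he : Tendsto (fun n : ℕ => |n * h n / d n - c| + |c| * (2 * (1 / n))) atTop (𝓝 0) := by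
    simpa using (hc.sub_const c).abs.add
      ((tendsto_one_div_atTop_nhds_zero_nat.const_mul 2).const_mul |c|)
  refine tendstoUniformlyOn_of_dist_le he ?_
  filter_upwards [eventually_ne_atTop 0] with n hn l hl
  have hl' := natFloor_mul_div_mem_Icc n hl
  have hτ' := natFloor_mul_div_mem_Icc n hτ
  rw [div_mul_sum_Icc_sum_Icc_sub_step (natFloor_mul_le_of_le_one n hl.2)
    (natFloor_mul_le_of_le_one n hτ.2), ← tent_eq_ite, Real.dist_eq, abs_sub_comm]
  calc _ ≤ |n * h n / d n - c| + |c| * |tent _ _ - tent l τ| :=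
        abs_mul_sub_mul_le (abs_tent_le_one hl' hτ')
    _ ≤ |n * h n / d n - c| + |c| * (2 * max |_ - l| |_ - τ|) := by
        gcongr; exact abs_tent_sub_tent_le hl' hτ' hl hτ
    _ ≤ |n * h n / d n - c| + |c| * (2 * (1 / n)) := by
        gcongr
        exact max_le (abs_natFloor_mul_div_sub_le hn hl.1) (abs_natFloor_mul_div_sub_le hn hτ.1)

/-- Under the local alternative with level shift `h n` satisfying `n * h n / d n → c`,
the deterministic drift term of the CUSUM process converges uniformly on `[0,1]`
to `c · φ_τ`. -/
theorem stmt0 (τ : ℝ) (hτ : τ ∈ Set.Icc (0:ℝ) 1) (c : ℝ) (d h : ℕ → ℝ)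
    (hd : ∀ n, 0 < d n)
    (hc : Tendsto (fun n : ℕ => (n : ℝ) * h n / d n) atTop (nhds c)) :
    TendstoUniformlyOn
      (fun (n : ℕ) (l : ℝ) =>
        (1 / ((n : ℝ) * d n)) *
          ∑ i ∈ Finset.Icc 1 ⌊(n : ℝ) * l⌋₊, ∑ j ∈ Finset.Icc (⌊(n : ℝ) * l⌋₊ + 1) n,
            ((if j ≤ ⌊(n : ℝ) * τ⌋₊ then (0:ℝ) else h n)
              - (if i ≤ ⌊(n : ℝ) * τ⌋₊ then (0:ℝ) else h n)))
      (fun l => c * (if l ≤ τ then l * (1 - τ) else (1 - l) * τ))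
      atTop (Set.Icc 0 1) :=
  stmt0_general τ hτ c d h hc
end

section
/- Let L : (0,∞) → (0,∞) be measurable and slowly varying, and let 0 < D < 1. Then Σ_{k=1}^{n} k^{−D} L(k) is asymptotically equivalent to n^{1−D} L(n)/(1−D), i.e. the ratio of the two sides tends to 1 as n → ∞. -/
/-!
Write `h = log ∘ L ∘ exp`, so that slow variation says `h (x + u) - h x → 0` for every `u`.
For measurable `h` this convergence is uniform for `u` in compact sets: the sets of `u` where
`h (x + u) - h x` is still large have measure tending to `0`, and two such sets cannot cover an
interval of length one. Chaining unit steps then gives Potter's bound `L k ≤ C (n / k) ^ δ L n`.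

For `ε n < k ≤ n` the ratio `L k / L n` lies within a factor `e^{±ε}` of `1`, so these terms
contribute `e^{±ε} L n ∑ k ^ (-D) ≈ e^{±ε} n ^ (1 - D) L n / (1 - D)`, while Potter's bound with
`δ = (1 - D) / 2` shows that the terms with `k ≤ ε n` contribute
`O(ε ^ ((1 - D) / 2)) n ^ (1 - D) L n`. Letting `ε → 0` gives the asymptotics.
-/

open Filter MeasureTheory Set Real Topology

lemma tendsto_div_of_eventually_mul_le_le_mul {ι α : Type*} {l : Filter α} [l.NeBot]
    {l' : Filter ι} {lo hi : α → ℝ} {f g : ι → ℝ} {y : ℝ} (hlo : Tendsto lo l (𝓝 y))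
    (hhi : Tendsto hi l (𝓝 y)) (hg : ∀ᶠ i in l', 0 < g i)
    (h : ∀ᶠ p in l, ∀ᶠ i in l', lo p * g i ≤ f i ∧ f i ≤ hi p * g i) :
    Tendsto (fun i => f i / g i) l' (𝓝 y) := by
  refine tendsto_order.2 ⟨fun c hc => ?_, fun c hc => ?_⟩
  · obtain ⟨p, hcp, hp⟩ := ((hlo.eventually (lt_mem_nhds hc)).and h).exists
    filter_upwards [hg, hp] with i hgi hi
    exact hcp.trans_le ((le_div_iff₀ hgi).2 hi.1)
  · obtain ⟨p, hcp, hp⟩ := ((hhi.eventually (gt_mem_nhds hc)).and h).exists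
    filter_upwards [hg, hp] with i hgi hi
    exact ((div_le_iff₀ hgi).2 hi.2).trans_lt hcp

section UniformConvergence

variable {h : ℝ → ℝ}

lemma tendsto_volume_inter_setOf_le_abs_sub (hm : Measurable h)
    (hh : ∀ u, Tendsto (fun x => h (x + u) - h x) atTop (𝓝 0)) {ε : ℝ} (hε : 0 < ε) (a : ℝ) :
    Tendsto (fun x => volume (Icc 0 a ∩ {v | ε ≤ |h (x + v) - h x|})) atTop (𝓝 0) := by
  have hmeas : ∀ x, MeasurableSet (Icc 0 a ∩ {v | ε ≤ |h (x + v) - h x|}) := fun x =>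
    measurableSet_Icc.inter <| measurableSet_le measurable_const
      ((hm.comp (measurable_const.add measurable_id)).sub measurable_const).abs
  simpa using tendsto_measure_of_tendsto_indicator (A := ∅) atTop hmeas measurableSet_Icc
    measure_Icc_lt_top.ne (.of_forall fun x => inter_subset_left) fun v => by
      filter_upwards [(hh v).abs.eventually_lt_const (by simpa using hε)] with x hx
      simp [hx.not_ge]

/-- The uniform convergence theorem for slow variation, in additive form. -/
theorem eventually_forall_Icc_abs_sub_lt (hm : Measurable h)
    (hh : ∀ u, Tendsto (fun x => h (x + u) - h x) atTop (𝓝 0)) {ε : ℝ} (hε : 0 < ε) (M : ℝ) :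
    ∀ᶠ x in atTop, ∀ u ∈ Icc 0 M, |h (x + u) - h x| < ε := by
  have hsmall (a : ℝ) :
      ∀ᶠ x in atTop, volume (Icc 0 a ∩ {v | ε / 2 ≤ |h (x + v) - h x|}) < 1 / 2 :=
    (tendsto_volume_inter_setOf_le_abs_sub hm hh (half_pos hε) a).eventually_lt_const
      (by norm_num)
  obtain ⟨X, hX⟩ := eventually_atTop.1 (hsmall 1)
  filter_upwards [hsmall (M + 1), eventually_ge_atTop X] with x hx hxX u hu
  -- The bad `t` for the steps `x ↝ x + u + t` and `x + u ↝ x + u + t` have total measure `< 1`,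
  -- so some `t ∈ [0, 1]` is good for both.
  obtain ⟨t, ht, htgood⟩ : (Icc (0 : ℝ) 1 \
      (Icc 0 1 ∩ {t | ε / 2 ≤ |h (x + u + t) - h (x + u)|} ∪
        (u + ·) ⁻¹' (Icc 0 (M + 1) ∩ {v | ε / 2 ≤ |h (x + v) - h x|}))).Nonempty := by
    refine sdiff_nonempty.2 fun hsub => ?_
    have : volume (Icc (0 : ℝ) 1) < 1 / 2 + 1 / 2 := calc
      _ ≤ volume (Icc 0 1 ∩ {t | ε / 2 ≤ |h (x + u + t) - h (x + u)|}) +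
            volume (Icc 0 (M + 1) ∩ {v | ε / 2 ≤ |h (x + v) - h x|}) := by
          rw [← measure_preimage_add volume u (Icc 0 (M + 1) ∩ _)]
          exact (measure_mono hsub).trans (measure_union_le (μ := volume) _ _)
      _ < 1 / 2 + 1 / 2 := ENNReal.add_lt_add (hX _ (by linarith [hu.1])) hx
    rw [ENNReal.add_halves] at this; simp at this
  simp only [mem_union, mem_inter_iff, mem_preimage, mem_ofPred_eq, not_or, not_and, not_le]
    at htgood
  have hut : u + t ∈ Icc 0 (M + 1) := ⟨by linarith [hu.1, ht.1], by linarith [hu.2, ht.2]⟩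
  calc |h (x + u) - h x| ≤ |h (x + u + t) - h (x + u)| + |h (x + (u + t)) - h x| := by
        rw [← add_assoc, abs_sub_comm (h (x + u + t))]; exact abs_sub_le _ _ _
    _ < ε / 2 + ε / 2 := add_lt_add (htgood.1 ht) (htgood.2 hut)
    _ = ε := add_halves ε

lemma abs_sub_le_mul_add_of_forall_Icc_zero_one {X δ : ℝ}
    (H : ∀ x ≥ X, ∀ u ∈ Icc (0 : ℝ) 1, |h (x + u) - h x| ≤ δ) {x y : ℝ} (hx : X ≤ x)
    (hxy : x ≤ y) : |h y - h x| ≤ δ * (y - x) + δ := by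
  have hδ : 0 ≤ δ := (abs_nonneg _).trans (H x hx 0 ⟨le_rfl, zero_le_one⟩)
  have hstep : ∀ x ≥ X, ∀ y ∈ Icc x (x + 1), |h y - h x| ≤ δ := fun x hx y hy => by
    simpa using H x hx (y - x) ⟨by linarith [hy.1], by linarith [hy.2]⟩
  have hchain (n : ℕ) : ∀ x ≥ X, ∀ y ∈ Icc x (x + (n + 1)), |h y - h x| ≤ δ * (n + 1) := by
    induction n with
    | zero => simpa using hstep
    | succ n ih =>
      intro x hx y hy
      rcases le_total y (x + 1) with hy1 | hy1
      · exact (hstep x hx y ⟨hy.1, hy1⟩).trans (by push_cast; nlinarith)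
      · calc |h y - h x| ≤ |h y - h (x + 1)| + |h (x + 1) - h x| := abs_sub_le _ _ _
          _ ≤ δ * (n + 1) + δ := add_le_add (ih (x + 1) (by linarith) y
                ⟨hy1, by push_cast at hy; linarith [hy.2]⟩)
              (hstep x hx (x + 1) ⟨by linarith, le_rfl⟩)
          _ = δ * ((n + 1 : ℕ) + 1) := by push_cast; ring
  calc |h y - h x| ≤ δ * (⌊y - x⌋₊ + 1) :=
        hchain _ x hx y ⟨hxy, by linarith [Nat.lt_floor_add_one (y - x)]⟩
    _ ≤ δ * (y - x) + δ := by nlinarith [Nat.floor_le (sub_nonneg.2 hxy)]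

end UniformConvergence

section PowerSums

lemma rpow_add_one_sub_rpow_le {q a : ℝ} (hq0 : 0 ≤ q) (hq1 : q ≤ 1) (ha : 0 < a) :
    (a + 1) ^ q - a ^ q ≤ q * a ^ (q - 1) := by
  have hB := rpow_one_add_le_one_add_mul_self (s := a⁻¹) (by linarith [inv_pos.2 ha]) hq0 hq1
  have : (a + 1) ^ q = a ^ q * (1 + a⁻¹) ^ q := by
    rw [← mul_rpow ha.le (by positivity), mul_add, mul_inv_cancel₀ ha.ne', mul_one]
  rw [this, rpow_sub_one ha.ne']
  have := rpow_nonneg ha.le q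
  calc a ^ q * (1 + a⁻¹) ^ q - a ^ q ≤ a ^ q * (1 + q * a⁻¹) - a ^ q := by gcongr
    _ = q * (a ^ q / a) := by ring

lemma mul_rpow_le_rpow_add_one_sub_rpow {q a : ℝ} (hq0 : 0 ≤ q) (hq1 : q ≤ 1) (ha : 0 ≤ a) :
    q * (a + 1) ^ (q - 1) ≤ (a + 1) ^ q - a ^ q := by
  have ha1 : 0 < a + 1 := by linarith
  have hinv : (a + 1)⁻¹ ≤ 1 := inv_le_one_of_one_le₀ (by linarith)
  have hB := rpow_one_add_le_one_add_mul_self (s := -(a + 1)⁻¹) (by linarith) hq0 hq1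
  have : a ^ q = (a + 1) ^ q * (1 + -(a + 1)⁻¹) ^ q := by
    rw [← mul_rpow ha1.le (by linarith), mul_add, mul_neg, mul_inv_cancel₀ ha1.ne', mul_one,
      add_neg_cancel_right]
  rw [this, rpow_sub_one ha1.ne']
  have := rpow_nonneg ha1.le q
  calc q * ((a + 1) ^ q / (a + 1)) = (a + 1) ^ q - (a + 1) ^ q * (1 + q * -(a + 1)⁻¹) := by ring
    _ ≤ _ := by gcongr

lemma sum_Icc_rpow_neg_le {s : ℝ} (hs0 : 0 ≤ s) (hs1 : s < 1) (n : ℕ) :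
    ∑ k ∈ Finset.Icc 1 n, (k : ℝ) ^ (-s) ≤ (n : ℝ) ^ (1 - s) / (1 - s) := by
  have hq : 0 < 1 - s := by linarith
  induction n with
  | zero => simp [zero_rpow hq.ne']
  | succ n ih =>
    have hstep := mul_rpow_le_rpow_add_one_sub_rpow (a := n) hq.le (by linarith) n.cast_nonneg
    rw [show 1 - s - 1 = -s by ring] at hstep
    rw [Finset.sum_Icc_succ_top (by omega), Nat.cast_succ, le_div_iff₀ hq]
    rw [le_div_iff₀ hq] at ih
    linarith

lemma sub_rpow_le_sum_Ioc_rpow_neg {s : ℝ} (hs0 : 0 ≤ s) (hs1 : s < 1) {m n : ℕ} (hmn : m ≤ n) :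
    (((n : ℝ) + 1) ^ (1 - s) - ((m : ℝ) + 1) ^ (1 - s)) / (1 - s) ≤
      ∑ k ∈ Finset.Ioc m n, (k : ℝ) ^ (-s) := by
  have hq : 0 < 1 - s := by linarith
  induction n, hmn using Nat.le_induction with
  | base => simp
  | succ n hmn ih =>
    have hstep := rpow_add_one_sub_rpow_le (a := n + 1) hq.le (by linarith) (by positivity)
    rw [show 1 - s - 1 = -s by ring] at hstep
    rw [Finset.sum_Ioc_succ_top (by omega), Nat.cast_succ, div_le_iff₀ hq]
    rw [div_le_iff₀ hq] at ih
    linarith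

lemma sum_Ioc_rpow_neg_mul_le {L : ℝ → ℝ} {D c : ℝ} {m n : ℕ} (hD0 : 0 ≤ D) (hD1 : D < 1)
    (hc : 0 ≤ c) (hL : ∀ k ∈ Finset.Ioc m n, L k ≤ c) :
    ∑ k ∈ Finset.Ioc m n, (k : ℝ) ^ (-D) * L k ≤ c * ((n : ℝ) ^ (1 - D) / (1 - D)) := calc
  _ ≤ ∑ k ∈ Finset.Ioc m n, c * (k : ℝ) ^ (-D) := Finset.sum_le_sum fun k hk =>
      (mul_le_mul_of_nonneg_left (hL k hk) (rpow_nonneg k.cast_nonneg _)).trans_eq (mul_comm _ _)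
  _ ≤ ∑ k ∈ Finset.Icc 1 n, c * (k : ℝ) ^ (-D) := by
      gcongr
      intro k hk
      simp only [Finset.mem_Ioc, Finset.mem_Icc] at hk ⊢
      omega
  _ ≤ c * ((n : ℝ) ^ (1 - D) / (1 - D)) := by
      rw [← Finset.mul_sum]; gcongr; exact sum_Icc_rpow_neg_le hD0 hD1 n

lemma mul_sub_rpow_le_sum_Ioc_rpow_neg_mul {L : ℝ → ℝ} {D c : ℝ} {m n : ℕ} (hD0 : 0 ≤ D)
    (hD1 : D < 1) (hmn : m ≤ n) (hc : 0 ≤ c) (hL : ∀ k ∈ Finset.Ioc m n, c ≤ L k) :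
    c * ((((n : ℝ) + 1) ^ (1 - D) - ((m : ℝ) + 1) ^ (1 - D)) / (1 - D)) ≤
      ∑ k ∈ Finset.Ioc m n, (k : ℝ) ^ (-D) * L k := calc
  _ ≤ c * ∑ k ∈ Finset.Ioc m n, (k : ℝ) ^ (-D) := by
      gcongr; exact sub_rpow_le_sum_Ioc_rpow_neg hD0 hD1 hmn
  _ ≤ ∑ k ∈ Finset.Ioc m n, (k : ℝ) ^ (-D) * L k := by
      rw [Finset.mul_sum]
      exact Finset.sum_le_sum fun k hk => (mul_comm _ _).trans_le
        (mul_le_mul_of_nonneg_left (hL k hk) (rpow_nonneg k.cast_nonneg _))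

lemma sum_Icc_rpow_neg_mul_le_of_le_mul_rpow {L : ℝ → ℝ} {D c ε : ℝ} {m n : ℕ} (hD0 : 0 ≤ D)
    (hD1 : D < 1) (hc : 0 ≤ c) (hε : 0 ≤ ε) (hm : (m : ℝ) ≤ ε * n)
    (hL : ∀ k ∈ Finset.Icc 1 m, L k ≤ c * ((n : ℝ) / k) ^ ((1 - D) / 2)) :
    ∑ k ∈ Finset.Icc 1 m, (k : ℝ) ^ (-D) * L k ≤
      2 * c * ε ^ ((1 - D) / 2) * ((n : ℝ) ^ (1 - D) / (1 - D)) := by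
  set δ := (1 - D) / 2 with hδ_def
  have hδ : 0 < δ := by linarith
  have hsum := sum_Icc_rpow_neg_le (s := D + δ) (by positivity) (by linarith) m
  rw [show 1 - (D + δ) = δ by ring] at hsum
  calc ∑ k ∈ Finset.Icc 1 m, (k : ℝ) ^ (-D) * L k
      ≤ ∑ k ∈ Finset.Icc 1 m, c * (n : ℝ) ^ δ * (k : ℝ) ^ (-(D + δ)) := by
        refine Finset.sum_le_sum fun k hk => ?_
        have hk0 : (0 : ℝ) < k := by exact_mod_cast (Finset.mem_Icc.1 hk).1
        calc (k : ℝ) ^ (-D) * L k ≤ (k : ℝ) ^ (-D) * (c * ((n : ℝ) / k) ^ δ) := by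
              gcongr; exact hL k hk
          _ = _ := by
              rw [div_rpow n.cast_nonneg hk0.le, neg_add, rpow_add hk0, rpow_neg hk0.le δ]
              field_simp
    _ = c * (n : ℝ) ^ δ * ∑ k ∈ Finset.Icc 1 m, (k : ℝ) ^ (-(D + δ)) := (Finset.mul_sum _ _ _).symm
    _ ≤ c * (n : ℝ) ^ δ * ((ε * n) ^ δ / δ) := by
        gcongr; exact hsum.trans (by gcongr)
    _ = 2 * c * ε ^ δ * ((n : ℝ) ^ (δ + δ) / (δ + δ)) := by
        rw [mul_rpow hε n.cast_nonneg, rpow_add' n.cast_nonneg (by positivity)]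
        field_simp
        ring
    _ = _ := by rw [show δ + δ = 1 - D by ring]

end PowerSums

section SlowlyVarying

variable {L : ℝ → ℝ} {D : ℝ}

lemma tendsto_log_comp_exp_add_sub (hLpos : ∀ x > 0, 0 < L x)
    (hLsv : ∀ a > 0, Tendsto (fun x => L (a * x) / L x) atTop (𝓝 1)) (u : ℝ) :
    Tendsto (fun x => log (L (exp (x + u))) - log (L (exp x))) atTop (𝓝 0) := by
  have := ((continuousAt_log one_ne_zero).tendsto.comp
    ((hLsv (exp u) (exp_pos u)).comp tendsto_exp_atTop))
  rw [log_one] at this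
  refine this.congr fun x => ?_
  simp only [Function.comp_apply]
  rw [log_div (hLpos _ (by positivity)).ne' (hLpos _ (exp_pos x)).ne', exp_add, mul_comm]

lemma eventually_forall_Icc_abs_log_sub_lt (hLpos : ∀ x > 0, 0 < L x) (hLmeas : Measurable L)
    (hLsv : ∀ a > 0, Tendsto (fun x => L (a * x) / L x) atTop (𝓝 1)) {r : ℝ} (hr : 0 < r)
    {Λ : ℝ} (hΛ : 0 < Λ) :
    ∀ᶠ x in atTop, ∀ y ∈ Icc x (Λ * x), |log (L y) - log (L x)| < r := by
  have hU := eventually_forall_Icc_abs_sub_lt (hLmeas.comp measurable_exp).log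
    (tendsto_log_comp_exp_add_sub hLpos hLsv) hr (log Λ)
  filter_upwards [tendsto_log_atTop.eventually hU, eventually_gt_atTop 0] with x hx hx0 y hy
  have hy0 : 0 < y := hx0.trans_le hy.1
  have hlog : log y - log x ≤ log Λ := by
    rw [sub_le_iff_le_add, ← log_mul hΛ.ne' hx0.ne']; exact log_le_log hy0 hy.2
  simpa [exp_log hx0, exp_log hy0]
    using hx (log y - log x) ⟨sub_nonneg.2 (log_le_log hx0 hy.1), hlog⟩

lemma eventually_forall_ge_le_exp_mul_rpow_mul (hLpos : ∀ x > 0, 0 < L x)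
    (hLmeas : Measurable L) (hLsv : ∀ a > 0, Tendsto (fun x => L (a * x) / L x) atTop (𝓝 1))
    {δ : ℝ} (hδ : 0 < δ) : ∀ᶠ a in atTop, ∀ b ≥ a, L a ≤ exp δ * (b / a) ^ δ * L b := by
  obtain ⟨X, hX⟩ := eventually_atTop.1 <| eventually_forall_Icc_abs_sub_lt
    (hLmeas.comp measurable_exp).log (tendsto_log_comp_exp_add_sub hLpos hLsv) hδ 1
  filter_upwards [tendsto_log_atTop.eventually_ge_atTop X, eventually_gt_atTop 0]
    with a ha ha0 b hab
  have hb0 : 0 < b := ha0.trans_le hab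
  have hchain := abs_sub_le_mul_add_of_forall_Icc_zero_one (h := fun t => log (L (exp t)))
    (fun x hx u hu => (hX x hx u hu).le) ha (log_le_log ha0 hab)
  simp only [exp_log ha0, exp_log hb0] at hchain
  rw [← log_le_log_iff (hLpos a ha0) (by have := hLpos b hb0; positivity),
    log_mul (by positivity) (hLpos b hb0).ne', log_mul (by positivity) (by positivity), log_exp,
    log_rpow (by positivity), log_div hb0.ne' ha0.ne']
  linarith [neg_abs_le (log (L b) - log (L a))]

lemma exists_eventually_forall_le_mul_rpow_mul (hLpos : ∀ x > 0, 0 < L x)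
    (hLmeas : Measurable L) (hLsv : ∀ a > 0, Tendsto (fun x => L (a * x) / L x) atTop (𝓝 1))
    {δ : ℝ} (hδ : 0 < δ) :
    ∃ C > 0, ∀ᶠ n : ℕ in atTop, ∀ k ∈ Finset.Icc 1 n, L k ≤ C * ((n : ℝ) / k) ^ δ * L n := by
  obtain ⟨X, hX⟩ :=
    eventually_atTop.1 (eventually_forall_ge_le_exp_mul_rpow_mul hLpos hLmeas hLsv hδ)
  obtain ⟨N, hN⟩ := exists_nat_ge (max X 1)
  have hN1 : (1 : ℝ) ≤ N := le_of_max_le_right hN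
  have hLN : 0 < L N := hLpos _ (by linarith)
  -- Below `N` only finitely many values of `L` occur, each bounded by a multiple of `L N`.
  set C₁ := (∑ j ∈ Finset.Icc 1 N, L (j : ℝ)) / L N
  refine ⟨exp δ * max 1 C₁, mul_pos (exp_pos δ) (lt_max_of_lt_left one_pos), ?_⟩
  filter_upwards [eventually_ge_atTop N] with n hn k hk
  obtain ⟨hk1, hkn⟩ := Finset.mem_Icc.1 hk
  have hk0 : (0 : ℝ) < k := by exact_mod_cast hk1
  have hkn' : (k : ℝ) ≤ n := by exact_mod_cast hkn
  have hLn : 0 < L n := hLpos _ (by linarith)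
  rcases le_total (k : ℝ) N with hkN | hNk
  · have hLk : L k ≤ C₁ * L N := by
      rw [div_mul_cancel₀ _ hLN.ne']
      refine Finset.single_le_sum (f := fun j : ℕ => L j) (fun j hj => (hLpos j ?_).le)
        (Finset.mem_Icc.2 ⟨hk1, by exact_mod_cast hkN⟩)
      exact_mod_cast (Finset.mem_Icc.1 hj).1
    have hC₁ : 0 ≤ C₁ := (pos_of_mul_pos_left ((hLpos k hk0).trans_le hLk) hLN.le).le
    calc L k ≤ C₁ * L N := hLk
      _ ≤ C₁ * (exp δ * (n / N) ^ δ * L n) := by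
        gcongr; exact hX N (le_of_max_le_left hN) n (by exact_mod_cast hn)
      _ ≤ max 1 C₁ * (exp δ * (n / k) ^ δ * L n) := by gcongr; exact le_max_right _ _
      _ = _ := by ring
  · calc L k ≤ exp δ * (n / k) ^ δ * L n := hX k ((le_of_max_le_left hN).trans hNk) n hkn'
      _ ≤ max 1 C₁ * (exp δ * (n / k) ^ δ * L n) :=
        le_mul_of_one_le_left (by positivity) (le_max_left _ _)
      _ = _ := by ring

lemma eventually_forall_Ioc_le_exp_mul (hLpos : ∀ x > 0, 0 < L x) (hLmeas : Measurable L)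
    (hLsv : ∀ a > 0, Tendsto (fun x => L (a * x) / L x) atTop (𝓝 1)) {ε r : ℝ} (hε : 0 < ε)
    (hr : 0 < r) :
    ∀ᶠ n : ℕ in atTop, ∀ k ∈ Finset.Ioc ⌊ε * n⌋₊ n, L k ≤ exp r * L n ∧ L n ≤ exp r * L k := by
  obtain ⟨X, hX⟩ :=
    eventually_atTop.1 (eventually_forall_Icc_abs_log_sub_lt hLpos hLmeas hLsv hr (inv_pos.2 hε))
  filter_upwards [tendsto_natCast_atTop_atTop.eventually_ge_atTop (max X 0 / ε)] with n hn k hk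
  obtain ⟨hmk, hkn⟩ := Finset.mem_Ioc.1 hk
  have hεn : max X 0 ≤ ε * n := by rw [div_le_iff₀ hε] at hn; linarith
  have hεk : ε * n < k := (Nat.floor_lt (by linarith [le_max_right X 0])).1 hmk
  have hk0 : (0 : ℝ) < k := by linarith [le_max_right X 0]
  have hkn' : (k : ℝ) ≤ n := by exact_mod_cast hkn
  have hlog := hX k (by linarith [le_max_left X 0]) n
    ⟨hkn', by rw [le_inv_mul_iff₀ hε]; exact hεk.le⟩
  have hLk := hLpos k hk0
  have hLn := hLpos n (hk0.trans_le hkn')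
  constructor
  · rw [← log_le_log_iff hLk (by positivity), log_mul (exp_ne_zero r) hLn.ne', log_exp]
    linarith [neg_abs_le (log (L n) - log (L k))]
  · rw [← log_le_log_iff hLn (by positivity), log_mul (exp_ne_zero r) hLk.ne', log_exp]
    linarith [le_abs_self (log (L n) - log (L k))]

lemma eventually_mul_le_sum (hLpos : ∀ x > 0, 0 < L x) (hLmeas : Measurable L)
    (hLsv : ∀ a > 0, Tendsto (fun x => L (a * x) / L x) atTop (𝓝 1)) (hD0 : 0 ≤ D) (hD1 : D < 1)
    {ε : ℝ} (hε0 : 0 < ε) (hε1 : ε ≤ 1) :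
    ∀ᶠ n : ℕ in atTop, exp (-ε) * (1 - (2 * ε) ^ (1 - D)) * ((n : ℝ) ^ (1 - D) * L n / (1 - D)) ≤
      ∑ k ∈ Finset.Icc 1 n, (k : ℝ) ^ (-D) * L k := by
  have hq : 0 < 1 - D := by linarith
  filter_upwards [eventually_forall_Ioc_le_exp_mul hLpos hLmeas hLsv hε0 hε0,
    tendsto_natCast_atTop_atTop.eventually_ge_atTop ε⁻¹] with n hcmp hn
  have hεn : 1 ≤ ε * n := by rwa [inv_le_iff_one_le_mul₀' hε0] at hn
  have hn0 : (0 : ℝ) < n := by nlinarith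
  set m := ⌊ε * n⌋₊
  have hmn : m ≤ n := Nat.floor_le_of_le (by nlinarith)
  have hm : (m : ℝ) + 1 ≤ 2 * ε * n := by linarith [Nat.floor_le (by linarith : 0 ≤ ε * n)]
  have hLn := hLpos n hn0
  calc exp (-ε) * (1 - (2 * ε) ^ (1 - D)) * ((n : ℝ) ^ (1 - D) * L n / (1 - D))
      = exp (-ε) * L n * (((n : ℝ) ^ (1 - D) - (2 * ε * n) ^ (1 - D)) / (1 - D)) := by
        rw [mul_rpow (by positivity) hn0.le]; ring
    _ ≤ exp (-ε) * L n * ((((n : ℝ) + 1) ^ (1 - D) - ((m : ℝ) + 1) ^ (1 - D)) / (1 - D)) := by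
        gcongr; linarith
    _ ≤ ∑ k ∈ Finset.Ioc m n, (k : ℝ) ^ (-D) * L k :=
        mul_sub_rpow_le_sum_Ioc_rpow_neg_mul hD0 hD1 hmn (by positivity) fun k hk => by
          rw [exp_neg, inv_mul_le_iff₀ (exp_pos ε)]; exact (hcmp k hk).2
    _ ≤ ∑ k ∈ Finset.Icc 1 n, (k : ℝ) ^ (-D) * L k := by
        rw [show Finset.Icc 1 n = Finset.Ioc 0 n from rfl,
          ← Finset.sum_Ioc_consecutive _ m.zero_le hmn]
        refine le_add_of_nonneg_left (Finset.sum_nonneg fun k hk => ?_)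
        have hk0 : (0 : ℝ) < k := by exact_mod_cast (Finset.mem_Ioc.1 hk).1
        exact mul_nonneg (rpow_nonneg hk0.le _) (hLpos k hk0).le

lemma exists_forall_eventually_sum_le (hLpos : ∀ x > 0, 0 < L x) (hLmeas : Measurable L)
    (hLsv : ∀ a > 0, Tendsto (fun x => L (a * x) / L x) atTop (𝓝 1)) (hD0 : 0 ≤ D)
    (hD1 : D < 1) :
    ∃ C, ∀ ε ∈ Ioc (0 : ℝ) 1, ∀ᶠ n : ℕ in atTop, ∑ k ∈ Finset.Icc 1 n, (k : ℝ) ^ (-D) * L k ≤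
      (exp ε + C * ε ^ ((1 - D) / 2)) * ((n : ℝ) ^ (1 - D) * L n / (1 - D)) := by
  obtain ⟨C, hC0, hC⟩ :=
    exists_eventually_forall_le_mul_rpow_mul hLpos hLmeas hLsv (half_pos (sub_pos.2 hD1))
  refine ⟨2 * C, fun ε hε => ?_⟩
  filter_upwards [hC, eventually_forall_Ioc_le_exp_mul hLpos hLmeas hLsv hε.1 hε.1,
    eventually_ge_atTop 1] with n hCn hcmp hn1
  have hLn := hLpos n (by exact_mod_cast hn1)
  set m := ⌊ε * n⌋₊
  have hmn : m ≤ n := Nat.floor_le_of_le (by nlinarith [hε.2])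
  have hhead := sum_Icc_rpow_neg_mul_le_of_le_mul_rpow (L := L) (c := C * L n) (m := m) hD0 hD1
    (by positivity) hε.1.le (Nat.floor_le (mul_nonneg hε.1.le n.cast_nonneg)) fun k hk => by
      simpa [mul_right_comm] using hCn k (Finset.Icc_subset_Icc_right hmn hk)
  have hmain := sum_Ioc_rpow_neg_mul_le (m := m) hD0 hD1 (by positivity) fun k hk =>
    (hcmp k hk).1
  rw [show Finset.Icc 1 n = Finset.Ioc 0 n from rfl,
    ← Finset.sum_Ioc_consecutive _ m.zero_le hmn]
  exact (add_le_add hhead hmain).trans_eq (by ring)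

end SlowlyVarying

/-- For a slowly varying `L` and `0 < D < 1`,
`Σ_{k=1}^n k^{−D} L(k) ∼ n^{1−D} L(n)/(1−D)`. -/
theorem stmt3 (L : ℝ → ℝ) (hLpos : ∀ x > (0:ℝ), 0 < L x)
    (hLmeas : Measurable L)
    (hLsv : ∀ a > (0:ℝ), Tendsto (fun x => L (a * x) / L x) atTop (nhds 1))
    (D : ℝ) (hD0 : 0 < D) (hD1 : D < 1) :
    Tendsto
      (fun n : ℕ =>
        (∑ k ∈ Finset.Icc 1 n, (k : ℝ) ^ (-D) * L k) /
          ((n : ℝ) ^ (1 - D) * L n / (1 - D)))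
      atTop (nhds 1) := by
  have hq : 0 < 1 - D := by linarith
  obtain ⟨C, hupper⟩ := exists_forall_eventually_sum_le hLpos hLmeas hLsv hD0.le hD1
  refine tendsto_div_of_eventually_mul_le_le_mul (l := 𝓝[>] 0)
    (lo := fun ε => exp (-ε) * (1 - (2 * ε) ^ (1 - D)))
    (hi := fun ε => exp ε + C * ε ^ ((1 - D) / 2)) ?_ ?_ ?_ ?_
  · have : ContinuousAt (fun ε => exp (-ε) * (1 - (2 * ε) ^ (1 - D))) 0 :=
      (continuous_exp.comp continuous_neg).continuousAt.mul
        (continuousAt_const.sub ((continuousAt_const.mul continuousAt_id).rpow_const (.inr hq.le)))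
    simpa [zero_rpow hq.ne'] using this.tendsto.mono_left nhdsWithin_le_nhds
  · have : ContinuousAt (fun ε => exp ε + C * ε ^ ((1 - D) / 2)) 0 :=
      continuous_exp.continuousAt.add
        (continuousAt_const.mul (continuousAt_id.rpow_const (.inr (half_pos hq).le)))
    simpa [zero_rpow (half_pos hq).ne'] using this.tendsto.mono_left nhdsWithin_le_nhds
  · filter_upwards [eventually_ge_atTop 1] with n hn
    have hn0 : (0 : ℝ) < n := by exact_mod_cast hn
    have := hLpos n hn0
    positivity
  · filter_upwards [Ioc_mem_nhdsGT one_pos] with ε hε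
    exact (eventually_mul_le_sum hLpos hLmeas hLsv hD0.le hD1 hε.1 hε.2).and (hupper ε hε)
end

section
/- Let η and ζ be independent random variables, each distributed according to the standard Gaussian measure on ℝ, let ρ ∈ [−1,1] and m ∈ ℕ. Then E[ He_m(ρ·η + √(1−ρ²)·ζ) · He_m(η) ] = m! · ρ^m. -/
/-!
Conditionally on `η`, the variable `ρη + √(1-ρ²)ζ` is Gaussian with mean `ρη` and variance
`1 - ρ²`, and for `a² + b² = 1` one has `∫ He_n(a x + b y) dγ(y) = aⁿ He_n(x)`: both sides
satisfy the three-term recurrence `He_{n+2} = X He_{n+1} - (n+1) He_n`, the `y`-term being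
handled by Gaussian integration by parts `∫ y f(y) dγ = ∫ f' dγ`. Integrating out `ζ` thus
leaves `ρ^m E[He_m(η)²]`, and integration by parts once more gives `E[He_m(η)²] = m!`.
-/

open MeasureTheory ProbabilityTheory Polynomial
open scoped NNReal

section Moments

variable {α : Type*} [MeasurableSpace α] {μ : Measure α} [IsFiniteMeasure μ] {f : α → ℝ}

lemma memLp_pow_of_forall_memLp (hf : ∀ p : ℝ≥0, MemLp f p μ) (n : ℕ) (p : ℝ≥0) :
    MemLp (fun x ↦ f x ^ n) p μ := by
  induction n generalizing p with
  | zero => simpa using memLp_const (1 : ℝ)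
  | succ n ih =>
    have : ENNReal.HolderTriple (2 * p : ℝ≥0) (2 * p : ℝ≥0) p := ⟨by
      push_cast
      rw [← two_mul, ENNReal.mul_inv (by simp) (by simp), ← mul_assoc,
        ENNReal.mul_inv_cancel two_ne_zero ENNReal.ofNat_ne_top, one_mul]⟩
    simpa only [pow_succ] using (hf (2 * p)).mul' (ih (2 * p)) (r := p)

lemma memLp_aeval_of_forall_memLp {R : Type*} [CommSemiring R] [Algebra R ℝ]
    (hf : ∀ p : ℝ≥0, MemLp f p μ) (q : R[X]) (p : ℝ≥0) :
    MemLp (fun x ↦ aeval (f x) q) p μ := by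
  induction q using Polynomial.induction_on' with
  | add q r hq hr =>
    simp only [map_add]
    exact hq.add hr
  | monomial n r =>
    simpa [aeval_monomial] using (memLp_pow_of_forall_memLp hf n p).const_mul (algebraMap R ℝ r)

end Moments

section Stein

variable {μ : ℝ} {v : ℝ≥0}

lemma integrable_gaussianReal_iff (hv : v ≠ 0) {g : ℝ → ℝ} :
    Integrable g (gaussianReal μ v) ↔ Integrable fun x ↦ gaussianPDFReal μ v x * g x := by
  rw [gaussianReal_of_var_ne_zero μ hv,
    integrable_withDensity_iff_integrable_smul' (measurable_gaussianPDF μ v)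
      (ae_of_all _ fun _ ↦ gaussianPDF_lt_top)]
  simp

lemma hasDerivAt_gaussianPDFReal (x : ℝ) :
    HasDerivAt (gaussianPDFReal μ v) (-(x - μ) / v * gaussianPDFReal μ v x) x := by
  have h : HasDerivAt (fun x ↦ -(x - μ) ^ 2 / (2 * v)) (-(2 * (x - μ)) / (2 * v)) x := by
    simpa using (((hasDerivAt_id x).sub_const μ).pow 2).neg.div_const (2 * (v : ℝ))
  rw [gaussianPDFReal_def]
  refine (h.exp.const_mul (√(2 * Real.pi * v))⁻¹).congr_deriv ?_
  field_simp

/-- Stein's lemma: Gaussian integration by parts. -/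
theorem integral_sub_mul_gaussianReal_eq_mul_integral_deriv (hv : v ≠ 0) {f f' : ℝ → ℝ}
    (hf : ∀ x, HasDerivAt f (f' x) x) (hfi : Integrable f (gaussianReal μ v))
    (hf'i : Integrable f' (gaussianReal μ v))
    (hxf : Integrable (fun x ↦ (x - μ) * f x) (gaussianReal μ v)) :
    ∫ x, (x - μ) * f x ∂gaussianReal μ v = v * ∫ x, f' x ∂gaussianReal μ v := by
  rw [integrable_gaussianReal_iff hv] at hfi hf'i hxf
  simp only [integral_gaussianReal_eq_integral_smul hv, smul_eq_mul]
  have hv' : (v : ℝ) ≠ 0 := by exact_mod_cast hv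
  have hpdf (x : ℝ) := hasDerivAt_gaussianPDFReal (μ := μ) (v := v) x
  have ibp := integral_mul_deriv_eq_deriv_mul_of_integrable (fun x _ ↦ hf x) (fun x _ ↦ hpdf x)
    ?_ ?_ ?_
  · calc ∫ x, gaussianPDFReal μ v x * ((x - μ) * f x)
        = -v * ∫ x, f x * (-(x - μ) / v * gaussianPDFReal μ v x) := by
          rw [← integral_const_mul]; congr 1; ext x; field_simp
      _ = v * ∫ x, gaussianPDFReal μ v x * f' x := by
          simp only [ibp, mul_comm (f' _)]; ring
  · refine (hxf.const_mul (-(v : ℝ)⁻¹)).congr (ae_of_all _ fun x ↦ ?_)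
    simp only [Pi.mul_apply]; field_simp
  · exact hf'i.congr (ae_of_all _ fun x ↦ mul_comm _ _)
  · exact hfi.congr (ae_of_all _ fun x ↦ mul_comm _ _)

end Stein

section Hermite

lemma derivative_hermite_succ (n : ℕ) :
    derivative (hermite (n + 1)) = (n + 1 : ℤ[X]) * hermite n := by
  induction n with
  | zero => simp
  | succ n ih =>
    rw [hermite_succ (n + 1), derivative_sub, derivative_mul, derivative_X, ih, hermite_succ n]
    simp only [derivative_mul, derivative_add, derivative_natCast, derivative_one]
    push_cast
    ring

lemma hermite_succ_succ (n : ℕ) :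
    hermite (n + 2) = X * hermite (n + 1) - (n + 1 : ℤ[X]) * hermite n := by
  rw [hermite_succ (n + 1), derivative_hermite_succ]

end Hermite

section StandardGaussian

local notation "γ" => gaussianReal 0 1

variable {R : Type*} [CommSemiring R] [Algebra R ℝ]

lemma memLp_affine_gaussianReal (μ : ℝ) (v : ℝ≥0) (c b : ℝ) (p : ℝ≥0) :
    MemLp (fun y ↦ c + b * y) p (gaussianReal μ v) :=
  (memLp_const c).add ((memLp_id_gaussianReal p).const_mul b)

lemma integrable_aeval_affine_gaussianReal (μ : ℝ) (v : ℝ≥0) (q : R[X]) (c b : ℝ) :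
    Integrable (fun y ↦ aeval (c + b * y) q) (gaussianReal μ v) :=
  memLp_one_iff_integrable.1 <| by
    simpa using memLp_aeval_of_forall_memLp (memLp_affine_gaussianReal μ v c b) q 1

lemma integrable_mul_aeval_affine_gaussianReal (μ : ℝ) (v : ℝ≥0) (q : R[X]) (c b : ℝ) :
    Integrable (fun y ↦ y * aeval (c + b * y) q) (gaussianReal μ v) := by
  have hL2 {f : ℝ → ℝ} (hf : ∀ p : ℝ≥0, MemLp f p (gaussianReal μ v)) :
      MemLp f 2 (gaussianReal μ v) := by
    simpa using hf 2
  exact (hL2 memLp_id_gaussianReal).integrable_mul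
    (hL2 (memLp_aeval_of_forall_memLp (memLp_affine_gaussianReal μ v c b) q))

lemma integral_mul_aeval_affine_gaussianReal (q : R[X]) (c b : ℝ) :
    ∫ y, y * aeval (c + b * y) q ∂γ = b * ∫ y, aeval (c + b * y) (derivative q) ∂γ := by
  have hderiv (y : ℝ) : HasDerivAt (fun y ↦ aeval (c + b * y) q)
      (aeval (c + b * y) (derivative q) * b) y := by
    have hlin : HasDerivAt (fun y ↦ c + b * y) b y := by
      simpa using ((hasDerivAt_id y).const_mul b).const_add c
    exact (q.hasDerivAt_aeval (c + b * y)).comp y hlin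
  simpa [integral_const_mul, mul_comm] using
    integral_sub_mul_gaussianReal_eq_mul_integral_deriv one_ne_zero hderiv
    (integrable_aeval_affine_gaussianReal 0 1 q c b)
    ((integrable_aeval_affine_gaussianReal 0 1 _ c b).mul_const b)
    (by simpa using integrable_mul_aeval_affine_gaussianReal 0 1 q c b)

theorem integral_aeval_hermite_gaussianReal {a b : ℝ} (hab : a ^ 2 + b ^ 2 = 1) (x : ℝ)
    (n : ℕ) : ∫ y, aeval (a * x + b * y) (hermite n) ∂γ = a ^ n * aeval x (hermite n) := by
  induction n using Nat.twoStepInduction with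
  | zero => simp
  | one =>
    have hid : Integrable (fun y ↦ y) γ := (memLp_id_gaussianReal 1).integrable (by simp)
    simp [integral_add (integrable_const _) (hid.const_mul b), integral_const_mul b (fun y ↦ y)]
  | more n ih₀ ih₁ =>
    have hint (q : ℤ[X]) := integrable_aeval_affine_gaussianReal 0 1 q (a * x) b
    have hmul := integrable_mul_aeval_affine_gaussianReal 0 1 (hermite (n + 1)) (a * x) b
    calc ∫ y, aeval (a * x + b * y) (hermite (n + 2)) ∂γ
        = ∫ y, a * x * aeval (a * x + b * y) (hermite (n + 1))
            + b * (y * aeval (a * x + b * y) (hermite (n + 1)))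
            - (n + 1) * aeval (a * x + b * y) (hermite n) ∂γ := by
          congr 1; ext y
          simp only [hermite_succ_succ, map_sub, map_mul, aeval_X, map_add, map_natCast, map_one]
          ring
      _ = a * x * ∫ y, aeval (a * x + b * y) (hermite (n + 1)) ∂γ
            + b * ∫ y, y * aeval (a * x + b * y) (hermite (n + 1)) ∂γ
            - (n + 1) * ∫ y, aeval (a * x + b * y) (hermite n) ∂γ := by
          rw [integral_sub, integral_add, integral_const_mul, integral_const_mul,
            integral_const_mul]
          · exact (hint _).const_mul _
          · exact hmul.const_mul _
          · exact ((hint _).const_mul _).add (hmul.const_mul _)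
          · exact (hint _).const_mul _
      _ = a ^ (n + 2) * aeval x (hermite (n + 2)) := by
        rw [integral_mul_aeval_affine_gaussianReal, derivative_hermite_succ]
        simp only [map_mul, map_add, map_natCast, map_one, integral_const_mul, ih₀, ih₁]
        rw [hermite_succ_succ]
        simp only [map_sub, map_mul, aeval_X, map_add, map_natCast, map_one]
        linear_combination (n + 1) * a ^ n * aeval x (hermite n) * hab

theorem integral_aeval_hermite_sq_gaussianReal (n : ℕ) :
    ∫ x, aeval x (hermite n) ^ 2 ∂γ = n.factorial := by
  have hint (q : ℤ[X]) : Integrable (fun x ↦ aeval x q) γ := by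
    simpa using integrable_aeval_affine_gaussianReal 0 1 q 0 1
  have hmul (q : ℤ[X]) : Integrable (fun x ↦ x * aeval x q) γ := by
    simpa using integrable_mul_aeval_affine_gaussianReal 0 1 q 0 1
  have hstein (q : ℤ[X]) : ∫ x, x * aeval x q ∂γ = ∫ x, aeval x (derivative q) ∂γ := by
    simpa using integral_mul_aeval_affine_gaussianReal q 0 1
  induction n with
  | zero => simp
  | succ n ih =>
    calc ∫ x, aeval x (hermite (n + 1)) ^ 2 ∂γ
        = ∫ x, x * aeval x (hermite n * hermite (n + 1))
            - aeval x (derivative (hermite n) * hermite (n + 1)) ∂γ := by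
          congr 1; ext x
          rw [sq]
          nth_rewrite 1 [hermite_succ]
          simp only [map_mul, map_sub, aeval_X]
          ring
      _ = ∫ x, aeval x (derivative (hermite n * hermite (n + 1)))
            - aeval x (derivative (hermite n) * hermite (n + 1)) ∂γ := by
          rw [integral_sub (hmul _) (hint _), integral_sub (hint _) (hint _), hstein]
      _ = ∫ x, (n + 1) * aeval x (hermite n) ^ 2 ∂γ := by
          congr 1; ext x
          simp only [derivative_mul, derivative_hermite_succ, map_add, map_mul, map_natCast,
            map_one]
          ring
      _ = (n + 1).factorial := by
          rw [integral_const_mul, ih]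
          push_cast [Nat.factorial_succ]
          ring

theorem integral_aeval_hermite_mul_aeval_hermite_gaussianReal_prod {a b : ℝ}
    (hab : a ^ 2 + b ^ 2 = 1) (n : ℕ) :
    ∫ z, aeval (a * z.1 + b * z.2) (hermite n) * aeval z.1 (hermite n)
      ∂(γ).prod γ = n.factorial * a ^ n := by
  have hfst (p : ℝ≥0) : MemLp (fun z : ℝ × ℝ ↦ z.1) p ((γ).prod γ) :=
    (memLp_id_gaussianReal p).comp_fst γ
  have hsnd (p : ℝ≥0) : MemLp (fun z : ℝ × ℝ ↦ z.2) p ((γ).prod γ) :=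
    (memLp_id_gaussianReal p).comp_snd γ
  have hL2 {f : ℝ × ℝ → ℝ} (hf : ∀ p : ℝ≥0, MemLp f p ((γ).prod γ)) :
      MemLp (fun z ↦ aeval (f z) (hermite n)) 2 ((γ).prod γ) := by
    simpa using memLp_aeval_of_forall_memLp hf (hermite n) 2
  have hint : Integrable (fun z ↦ aeval (a * z.1 + b * z.2) (hermite n) * aeval z.1 (hermite n))
      ((γ).prod γ) :=
    (hL2 fun p ↦ ((hfst p).const_mul a).add ((hsnd p).const_mul b)).integrable_mul (hL2 hfst)
  rw [integral_prod _ hint]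
  simp only [integral_mul_const, integral_aeval_hermite_gaussianReal hab]
  simp only [mul_assoc, ← sq, integral_const_mul, integral_aeval_hermite_sq_gaussianReal]
  ring

end StandardGaussian

/-- For a standard bivariate Gaussian pair `(ρη + √(1−ρ²)ζ, η)` with correlation `ρ`,
`E[He_m(ρη + √(1−ρ²)ζ) · He_m(η)] = m! · ρ^m`, where `He_m` is the m-th
probabilists' Hermite polynomial. -/
theorem stmt5 {Ω : Type*} [MeasurableSpace Ω] (P : Measure Ω) [IsProbabilityMeasure P]
    (η ζ : Ω → ℝ) (hη : Measurable η) (hζ : Measurable ζ)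
    (hindep : IndepFun η ζ P)
    (hηlaw : P.map η = gaussianReal 0 1) (hζlaw : P.map ζ = gaussianReal 0 1)
    (ρ : ℝ) (hρ : ρ ∈ Set.Icc (-1 : ℝ) 1) (m : ℕ) :
    ∫ ω, (Polynomial.aeval (ρ * η ω + Real.sqrt (1 - ρ ^ 2) * ζ ω) (hermite m)) *
        (Polynomial.aeval (η ω) (hermite m)) ∂P
      = (Nat.factorial m : ℝ) * ρ ^ m := by
  have hlaw : P.map (fun ω ↦ (η ω, ζ ω)) = (gaussianReal 0 1).prod (gaussianReal 0 1) := by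
    simpa only [hηlaw, hζlaw] using
      (indepFun_iff_map_prod_eq_prod_map_map hη.aemeasurable hζ.aemeasurable).1 hindep
  have hab : ρ ^ 2 + Real.sqrt (1 - ρ ^ 2) ^ 2 = 1 := by
    rw [Real.sq_sqrt (by nlinarith [hρ.1, hρ.2])]
    ring
  rw [← integral_aeval_hermite_mul_aeval_hermite_gaussianReal_prod hab, ← hlaw,
    integral_map (hη.prodMk hζ).aemeasurable (by fun_prop)]
end

section
/- Let G : ℝ → ℝ be nondecreasing and right-continuous with ∫ |x·G(x)| dγ(x) < ∞ and ∫ φ(t) dμ_G(t) < ∞, where μ_G is the Lebesgue–Stieltjes measure associated with G. Then ∫ x·G(x) dγ(x) = ∫ φ(t) dμ_G(t). In particular, if G is not constant, then the first-order Hermite coefficient a_1 = E[ξ·G(ξ)] = ∫ x·G(x) dγ(x) is strictly positive. -/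
/-!
Since `∫ x dγ = 0`, we may replace `G x` by
`G x - G 0 = ∫ (𝟙{0 < t ≤ x} - 𝟙{x < t ≤ 0}) dμ_G(t)`. The kernel equals
`𝟙{t ≤ x} - 𝟙{t ≤ 0}`, so Fubini turns `∫ x G(x) dγ` into `∫ (∫_{x ≥ t} x dγ(x)) dμ_G(t)`,
and the inner integral is `φ(t)` because `φ' = -x φ`. Positivity follows as `φ > 0` and
`μ_G ≠ 0` when `G` is not constant.
-/

open MeasureTheory ProbabilityTheory Set Filter Topology Real

lemma indicator_Ioc_sub_indicator_Ioc (a x t : ℝ) :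
    (Ioc a x).indicator (1 : ℝ → ℝ) t - (Ioc x a).indicator 1 t
      = (Ici t).indicator 1 x - (Ici t).indicator 1 a := by
  simp only [indicator_apply, mem_Ioc, mem_Ici, Pi.one_apply]
  grind

lemma abs_indicator_Ioc_sub_indicator_Ioc (a x t : ℝ) :
    |(Ioc a x).indicator (1 : ℝ → ℝ) t - (Ioc x a).indicator 1 t|
      = (Ioc a x).indicator 1 t + (Ioc x a).indicator 1 t := by
  simp only [indicator_apply, mem_Ioc, Pi.one_apply]
  grind

lemma measurable_indicator_Ioc_sub_indicator_Ioc (a : ℝ) :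
    Measurable fun p : ℝ × ℝ =>
      (Ioc a p.1).indicator (1 : ℝ → ℝ) p.2 - (Ioc p.1 a).indicator 1 p.2 := by
  simp_rw [indicator_Ioc_sub_indicator_Ioc, indicator_apply, mem_Ici, Pi.one_apply]
  exact (Measurable.ite (measurableSet_le measurable_snd measurable_fst) measurable_const
    measurable_const).sub (Measurable.ite (measurableSet_le measurable_snd measurable_const)
    measurable_const measurable_const)

lemma integral_pos_of_forall_pos {α : Type*} [MeasurableSpace α] {μ : Measure α}
    {f : α → ℝ} (hμ : μ ≠ 0) (hf : ∀ x, 0 < f x) (hfi : Integrable f μ) : 0 < ∫ x, f x ∂μ := by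
  rw [integral_pos_iff_support_of_nonneg (fun x => (hf x).le) hfi,
    Function.support_eq_univ fun x => (hf x).ne']
  exact Measure.measure_univ_pos.2 hμ

namespace StieltjesFunction

variable (G : StieltjesFunction ℝ)

lemma measureReal_Ioc (a b : ℝ) : G.measure.real (Ioc a b) = max (G b - G a) 0 := by
  rw [measureReal_def, G.measure_Ioc, ENNReal.toReal_ofReal']

lemma measure_ne_zero_of_ne {x y : ℝ} (h : G x ≠ G y) : G.measure ≠ 0 := by
  intro h_zero
  have hxy := G.measureReal_Ioc x y
  have hyx := G.measureReal_Ioc y x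
  simp only [h_zero, measureReal_zero_apply] at hxy hyx
  exact h (by grind)

lemma integrable_indicator_Ioc (a b : ℝ) :
    Integrable ((Ioc a b).indicator (1 : ℝ → ℝ)) G.measure :=
  (integrable_indicator_iff measurableSet_Ioc).2 (integrableOn_const measure_Ioc_lt_top.ne)

lemma integral_indicator_Ioc_sub_indicator_Ioc (a x : ℝ) :
    ∫ t, ((Ioc a x).indicator 1 t - (Ioc x a).indicator 1 t) ∂G.measure = G x - G a := by
  rw [integral_sub (G.integrable_indicator_Ioc a x) (G.integrable_indicator_Ioc x a),
    integral_indicator_one measurableSet_Ioc, integral_indicator_one measurableSet_Ioc,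
    measureReal_Ioc, measureReal_Ioc, ← neg_sub (G x), max_zero_sub_max_neg_zero_eq_self]

lemma integral_abs_indicator_Ioc_sub_indicator_Ioc (a x : ℝ) :
    ∫ t, |(Ioc a x).indicator 1 t - (Ioc x a).indicator 1 t| ∂G.measure = |G x - G a| := by
  simp_rw [abs_indicator_Ioc_sub_indicator_Ioc]
  rw [integral_add (G.integrable_indicator_Ioc a x) (G.integrable_indicator_Ioc x a),
    integral_indicator_one measurableSet_Ioc, integral_indicator_one measurableSet_Ioc,
    measureReal_Ioc, measureReal_Ioc, ← neg_sub (G x), max_zero_add_max_neg_zero_eq_abs_self]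

theorem integral_mul_eq_integral_setIntegral_Ici {ν : Measure ℝ} [SFinite ν] {g : ℝ → ℝ}
    (hg : Integrable g ν) (hg₀ : ∫ x, g x ∂ν = 0) (hgG : Integrable (fun x => g x * G x) ν) :
    ∫ x, g x * G x ∂ν = ∫ t, ∫ x in Ici t, g x ∂ν ∂G.measure := by
  set F : ℝ → ℝ → ℝ := fun x t => g x * ((Ioc 0 x).indicator 1 t - (Ioc x 0).indicator 1 t)
  have hgG₀ : Integrable (fun x => g x * (G x - G 0)) ν :=
    (hgG.sub (hg.mul_const (G 0))).congr (.of_forall fun x => (mul_sub _ _ _).symm)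
  have hF : Integrable (Function.uncurry F) (ν.prod G.measure) := by
    refine (integrable_prod_iff ?_).2 ⟨.of_forall fun x => ?_, ?_⟩
    · exact hg.1.comp_fst.mul
        (measurable_indicator_Ioc_sub_indicator_Ioc 0).aestronglyMeasurable
    · exact ((G.integrable_indicator_Ioc 0 x).sub
        (G.integrable_indicator_Ioc x 0)).const_mul (g x)
    · refine hgG₀.norm.congr (.of_forall fun x => ?_)
      simp only [Function.uncurry_apply_pair, F, norm_mul, Real.norm_eq_abs, integral_const_mul,
        integral_abs_indicator_Ioc_sub_indicator_Ioc]
  have hF_left (t : ℝ) : ∫ x, F x t ∂ν = ∫ x in Ici t, g x ∂ν := by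
    have h_ind (x : ℝ) : g x * (Ici t).indicator 1 x = (Ici t).indicator g x := by
      simp [indicator_apply]
    simp only [F, indicator_Ioc_sub_indicator_Ioc, mul_sub, h_ind]
    rw [integral_sub (hg.indicator measurableSet_Ici) (hg.mul_const _), integral_mul_const, hg₀,
      zero_mul, sub_zero, integral_indicator measurableSet_Ici]
  calc ∫ x, g x * G x ∂ν = ∫ x, g x * (G x - G 0) ∂ν := by
        simp only [mul_sub]
        rw [integral_sub hgG (hg.mul_const _), integral_mul_const, hg₀, zero_mul, sub_zero]
    _ = ∫ x, ∫ t, F x t ∂G.measure ∂ν := by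
        simp only [F, integral_const_mul, integral_indicator_Ioc_sub_indicator_Ioc]
    _ = ∫ t, ∫ x, F x t ∂ν ∂G.measure := integral_integral_swap hF
    _ = ∫ t, ∫ x in Ici t, g x ∂ν ∂G.measure := by simp only [hF_left]

end StieltjesFunction

lemma gaussianPDFReal_zero_one (x : ℝ) :
    gaussianPDFReal 0 1 x = (√(2 * π))⁻¹ * exp (-(x ^ 2) / 2) := by
  simp [gaussianPDFReal]

lemma hasDerivAt_gaussianPDFReal_zero_one (x : ℝ) :
    HasDerivAt (gaussianPDFReal 0 1) (-x * gaussianPDFReal 0 1 x) x := by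
  have h_exponent : HasDerivAt (fun y : ℝ => -(y ^ 2) / 2) (-x) x :=
    ((hasDerivAt_pow 2 x).fun_neg.div_const 2).congr_deriv (by push_cast; ring)
  rw [funext gaussianPDFReal_zero_one]
  exact (h_exponent.exp.const_mul _).congr_deriv (by ring)

lemma integrable_mul_gaussianPDFReal_zero_one :
    Integrable fun x => x * gaussianPDFReal 0 1 x := by
  simp_rw [gaussianPDFReal_zero_one, show ∀ x : ℝ, -(x ^ 2) / 2 = -(1 / 2) * x ^ 2 by
    intro x; ring, mul_left_comm _ (√(2 * π))⁻¹]
  exact (integrable_mul_exp_neg_mul_sq one_half_pos).const_mul _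

lemma setIntegral_Ici_mul_gaussianPDFReal_zero_one (t : ℝ) :
    ∫ x in Ici t, x * gaussianPDFReal 0 1 x = gaussianPDFReal 0 1 t := by
  have h_int := integrable_mul_gaussianPDFReal_zero_one
  have h_lim : Tendsto (gaussianPDFReal 0 1) atTop (𝓝 0) :=
    tendsto_zero_of_hasDerivAt_of_integrableOn_Ioi (a := 0)
      (fun x _ => hasDerivAt_gaussianPDFReal_zero_one x)
      (by simpa only [neg_mul] using h_int.fun_neg.integrableOn)
      (integrable_gaussianPDFReal 0 1).integrableOn
  rw [integral_Ici_eq_integral_Ioi, integral_Ioi_of_hasDerivAt_of_tendsto'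
    (fun x _ => by simpa using (hasDerivAt_gaussianPDFReal_zero_one x).fun_neg) h_int.integrableOn
    h_lim.neg, neg_zero, zero_sub, neg_neg]

lemma setIntegral_Ici_id_gaussianReal (t : ℝ) :
    ∫ x in Ici t, x ∂gaussianReal 0 1 = gaussianPDFReal 0 1 t := by
  rw [gaussianReal_of_var_ne_zero 0 one_ne_zero, setIntegral_withDensity_eq_setIntegral_toReal_smul'
    _ (measurable_gaussianPDF 0 1) (.of_forall fun _ => gaussianPDF_lt_top)]
  simp_rw [toReal_gaussianPDF, smul_eq_mul, mul_comm (gaussianPDFReal 0 1 _)]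
  exact setIntegral_Ici_mul_gaussianPDFReal_zero_one t

/-- Integration by parts for the first Hermite coefficient: for a nondecreasing
right-continuous `G` (a Stieltjes function), `∫ x G(x) dγ(x) = ∫ φ dμ_G`, and if `G` is
not constant then `a₁ = E[ξ G(ξ)] > 0`. Here `γ` is the standard Gaussian measure and
`φ` its density. -/
theorem stmt6 (G : StieltjesFunction ℝ)
    (h1 : Integrable (fun x => x * G x) (gaussianReal 0 1))
    (h2 : Integrable (fun t => (Real.sqrt (2 * Real.pi))⁻¹ * Real.exp (-(t ^ 2) / 2))
      G.measure) :
    (∫ x, x * G x ∂(gaussianReal 0 1)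
        = ∫ t, (Real.sqrt (2 * Real.pi))⁻¹ * Real.exp (-(t ^ 2) / 2) ∂G.measure) ∧
      ((∃ x y, G x ≠ G y) → 0 < ∫ x, x * G x ∂(gaussianReal 0 1)) := by
  have h_id : Integrable (fun x => x) (gaussianReal 0 1) :=
    (memLp_id_gaussianReal 1).integrable le_rfl
  have h_eq : ∫ x, x * G x ∂(gaussianReal 0 1)
      = ∫ t, (Real.sqrt (2 * Real.pi))⁻¹ * Real.exp (-(t ^ 2) / 2) ∂G.measure := by
    rw [G.integral_mul_eq_integral_setIntegral_Ici h_id integral_id_gaussianReal h1]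
    simp_rw [setIntegral_Ici_id_gaussianReal, gaussianPDFReal_zero_one]
  refine ⟨h_eq, fun ⟨x, y, hxy⟩ => h_eq ▸ ?_⟩
  exact integral_pos_of_forall_pos (G.measure_ne_zero_of_ne hxy) (fun t => by positivity) h2
end

section
/- Let μ be a probability measure on ℝ with density f bounded by a constant M, let F be its distribution function, and let X, Y be independent random variables each with law μ. Set θ_h = P(Y < X ≤ Y + h) and W_h = 1_{Y < X ≤ Y + h} − (F(X) − F(X−h)) − (F(Y+h) − F(Y)) + θ_h. Then there is a constant C, depending only on M, such that Var(W_h) ≤ C·h for all h ∈ (0,1]. -/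
/-!
Write `W_h = 1_A + r` with `A = {Y < X ≤ Y + h}` and `r = θ_h - h₁ - h₂`. A density bounded by
`M` makes every `F`-increment over an interval of length `h` at most `M h`, and by Fubini the same
holds for `θ_h`, since each slice of `A` is such an interval. Hence `|r| ≤ 2 M h`, so
`W_h² ≤ 2·1_A + 8 M² h²`, and `Var W_h ≤ E[W_h²] ≤ 2 θ_h + 8 M² h² ≤ (2 M + 8 M²) h` for `h ≤ 1`.
-/

open MeasureTheory ProbabilityTheory Set

lemma withDensity_ofReal_apply_le_mul {α : Type*} [MeasurableSpace α] (ν : Measure α) [SFinite ν]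
    {f : α → ℝ} {M : ℝ} (hf : ∀ x, f x ≤ M) (s : Set α) :
    ν.withDensity (fun x => ENNReal.ofReal (f x)) s ≤ ENNReal.ofReal M * ν s := by
  rw [withDensity_apply' _ s, ← setLIntegral_const]
  exact lintegral_mono fun x => ENNReal.ofReal_le_ofReal (hf x)

lemma withDensity_ofReal_apply_Icc_le {f : ℝ → ℝ} {M : ℝ} (hM : 0 ≤ M) (hf : ∀ x, f x ≤ M)
    (a b : ℝ) :
    volume.withDensity (fun x => ENNReal.ofReal (f x)) (Icc a b) ≤
      ENNReal.ofReal (M * (b - a)) := by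
  rw [ENNReal.ofReal_mul hM, ← Real.volume_Icc]
  exact withDensity_ofReal_apply_le_mul volume hf _

lemma measurable_measureReal_Iic (μ : Measure ℝ) [IsFiniteMeasure μ] :
    Measurable fun x => μ.real (Iic x) :=
  Monotone.measurable fun _ _ hab => measureReal_mono (Iic_subset_Iic.2 hab)

lemma measureReal_Iic_add_sub_mem_Icc {μ : Measure ℝ} [IsFiniteMeasure μ] {M : ℝ} (hM : 0 ≤ M)
    (hμ : ∀ a b, μ (Icc a b) ≤ ENNReal.ofReal (M * (b - a))) (x : ℝ) {h : ℝ} (hh : 0 ≤ h) :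
    μ.real (Iic (x + h)) - μ.real (Iic x) ∈ Icc 0 (M * h) := by
  rw [← measureReal_sdiff (Iic_subset_Iic.2 (le_add_of_nonneg_right hh)) measurableSet_Iic,
    Iic_sdiff_Iic]
  refine ⟨measureReal_nonneg, ENNReal.toReal_le_of_le_ofReal (mul_nonneg hM hh) ?_⟩
  simpa using (measure_mono Ioc_subset_Icc_self).trans (hμ x (x + h))

lemma ProbabilityTheory.IndepFun.measure_lt_and_le_add_le {Ω : Type*} [MeasurableSpace Ω] {P : Measure Ω}
    [IsProbabilityMeasure P] {X Y : Ω → ℝ} (hX : Measurable X) (hY : Measurable Y)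
    (hindep : IndepFun X Y P) {M : ℝ}
    (hY_Icc : ∀ a b, P.map Y (Icc a b) ≤ ENNReal.ofReal (M * (b - a))) (h : ℝ) :
    P {ω | Y ω < X ω ∧ X ω ≤ Y ω + h} ≤ ENNReal.ofReal (M * h) := by
  set S := {p : ℝ × ℝ | p.2 < p.1 ∧ p.1 ≤ p.2 + h}
  have hS : MeasurableSet S := (measurableSet_lt measurable_snd measurable_fst).inter
    (measurableSet_le measurable_fst (measurable_snd.add_const h))
  have hslice (x : ℝ) : Prod.mk x ⁻¹' S ⊆ Icc (x - h) x :=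
    fun y hy => ⟨by linarith [hy.2], hy.1.le⟩
  calc P {ω | Y ω < X ω ∧ X ω ≤ Y ω + h} = (P.map X).prod (P.map Y) S := by
        rw [← (indepFun_iff_map_prod_eq_prod_map_map hX.aemeasurable hY.aemeasurable).1 hindep,
          Measure.map_apply (hX.prodMk hY) hS]
        rfl
    _ ≤ ∫⁻ x, P.map Y (Prod.mk x ⁻¹' S) ∂P.map X := Measure.prod_apply_le hS
    _ ≤ ∫⁻ _, ENNReal.ofReal (M * h) ∂P.map X :=
        lintegral_mono fun x =>
          (measure_mono (hslice x)).trans ((hY_Icc _ _).trans_eq (by ring_nf))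
    _ = ENNReal.ofReal (M * h) := by simp [Measure.map_apply hX MeasurableSet.univ]

lemma sq_sub_sub_add_le {i a b t c : ℝ} (hi₀ : 0 ≤ i) (hi₁ : i ≤ 1) (ha : a ∈ Icc 0 c)
    (hb : b ∈ Icc 0 c) (ht : t ∈ Icc 0 c) : (i - a - b + t) ^ 2 ≤ 2 * i + 8 * c ^ 2 := by
  obtain ⟨ha₀, ha₁⟩ := ha
  obtain ⟨hb₀, hb₁⟩ := hb
  obtain ⟨ht₀, ht₁⟩ := ht
  have hr : (t - a - b) ^ 2 ≤ (2 * c) ^ 2 := sq_le_sq' (by linarith) (by linarith)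
  calc (i - a - b + t) ^ 2 = (i + (t - a - b)) ^ 2 := by ring
    _ ≤ 2 * (i ^ 2 + (t - a - b) ^ 2) := add_sq_le
    _ ≤ 2 * i + 8 * c ^ 2 := by nlinarith

lemma variance_le_of_sq_le_indicator {Ω : Type*} [MeasurableSpace Ω] {P : Measure Ω}
    [IsProbabilityMeasure P] {W : Ω → ℝ} (hW : AEStronglyMeasurable W P) {A : Set Ω}
    (hA : MeasurableSet A) {c k : ℝ} (hWA : ∀ ω, W ω ^ 2 ≤ c * A.indicator 1 ω + k) :
    variance W P ≤ c * P.real A + k := by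
  have hI : Integrable (A.indicator (1 : Ω → ℝ)) P := (integrable_const 1).indicator hA
  calc variance W P ≤ ∫ ω, W ω ^ 2 ∂P := variance_le_expectation_sq hW
    _ ≤ ∫ ω, c * A.indicator 1 ω + k ∂P :=
      integral_mono_of_nonneg (.of_forall fun ω => sq_nonneg _)
        ((hI.const_mul c).add (integrable_const k)) (.of_forall hWA)
    _ = c * P.real A + k := by
      rw [integral_add (hI.const_mul c) (integrable_const k), integral_const_mul,
        integral_indicator_one hA]
      simp

/-- Variance bound for the fully degenerate term of the Hoeffding decomposition of the
kernel `1_{y < x ≤ y+h}`: `Var(W_h) ≤ C·h` for `h ∈ (0,1]`, with `C` depending only on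
the bound `M` of the density. -/
theorem stmt9 {Ω : Type*} [MeasurableSpace Ω] (P : Measure Ω) [IsProbabilityMeasure P]
    (X Y : Ω → ℝ) (hX : Measurable X) (hY : Measurable Y)
    (hindep : IndepFun X Y P)
    (μ : Measure ℝ) (hXlaw : P.map X = μ) (hYlaw : P.map Y = μ)
    (f : ℝ → ℝ) (M : ℝ) (hf_nonneg : ∀ x, 0 ≤ f x) (hf_bdd : ∀ x, f x ≤ M)
    (hμ : μ = volume.withDensity fun x => ENNReal.ofReal (f x)) :
    ∃ C : ℝ, ∀ h ∈ Set.Ioc (0:ℝ) 1,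
      variance
        (fun ω =>
          (if Y ω < X ω ∧ X ω ≤ Y ω + h then (1:ℝ) else 0)
            - ((μ (Set.Iic (X ω))).toReal - (μ (Set.Iic (X ω - h))).toReal)
            - ((μ (Set.Iic (Y ω + h))).toReal - (μ (Set.Iic (Y ω))).toReal)
            + (P {ω | Y ω < X ω ∧ X ω ≤ Y ω + h}).toReal)
        P ≤ C * h := by
  refine ⟨2 * M + 8 * M ^ 2, fun h ⟨hh₀, hh₁⟩ => ?_⟩
  simp only [← measureReal_def]
  have hM : 0 ≤ M := (hf_nonneg 0).trans (hf_bdd 0)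
  have : IsProbabilityMeasure μ := hXlaw ▸ Measure.isProbabilityMeasure_map hX.aemeasurable
  have hμ_Icc : ∀ a b, μ (Icc a b) ≤ ENNReal.ofReal (M * (b - a)) :=
    hμ ▸ withDensity_ofReal_apply_Icc_le hM hf_bdd
  have hF := measurable_measureReal_Iic μ
  have hinc (x : ℝ) := measureReal_Iic_add_sub_mem_Icc hM hμ_Icc x hh₀.le
  set A := {ω | Y ω < X ω ∧ X ω ≤ Y ω + h}
  have hA : MeasurableSet A :=
    (measurableSet_lt hY hX).inter (measurableSet_le hX (hY.add_const h))
  have hθ : P.real A ≤ M * h := ENNReal.toReal_le_of_le_ofReal (by positivity)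
    (hindep.measure_lt_and_le_add_le hX hY (hYlaw ▸ hμ_Icc) h)
  refine (variance_le_of_sq_le_indicator (c := 2) (k := 8 * (M * h) ^ 2) ?_ hA
    fun ω => ?_).trans (by nlinarith)
  · exact Measurable.aestronglyMeasurable <|
      (((measurable_const.ite hA measurable_const).sub
        ((hF.comp hX).sub (hF.comp (hX.sub_const h)))).sub
        ((hF.comp (hY.add_const h)).sub (hF.comp hY))).add_const _
  · have hi : A.indicator (1 : Ω → ℝ) ω = if Y ω < X ω ∧ X ω ≤ Y ω + h then 1 else 0 := by
      simp only [indicator_apply, A, mem_ofPred_eq, Pi.one_apply]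
    rw [hi]
    exact sq_sub_sub_add_le (by split_ifs <;> norm_num) (by split_ifs <;> norm_num)
      (by simpa only [sub_add_cancel] using hinc (X ω - h)) (hinc (Y ω)) ⟨measureReal_nonneg, hθ⟩
end

section
/- Let (ε_i)_{i≥1} be i.i.d. real random variables with common law μ, let τ ∈ (0,1), let v_n → 0 be positive reals and C > 0, and for each n let g_n : ℝ² → ℝ be measurable with ∫ g_n(x,y) dμ(y) = 0 for μ-a.e. x, ∫ g_n(x,y) dμ(x) = 0 for μ-a.e. y, and E[g_n(ε_1,ε_2)²] ≤ C·v_n. Then, with T_n = ⌊nτ⌋, max_{1 ≤ l ≤ T_n} n^{−3/2} | Σ_{i=1}^{l} Σ_{j=T_n+1}^{n} g_n(ε_i, ε_j) | → 0 in probability as n → ∞. -/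
/-! The double sums `S_l = ∑_{i ≤ l} ∑_{j > T} g(ε_i, ε_j)`, `l ≤ T`, have pairwise orthogonal
summands: two distinct index pairs sharing an index integrate to zero by the complete degeneracy
of `g`, disjoint pairs by independence and `E[g(ε_1, ε_2)] = 0`. Hence `E[S_l²] ≤ n² E[g²]`, and
Chebyshev's inequality with a union bound over the at most `n` values of `l` bounds the
probability in question by `n · n² C v_n / (s² n³) = C v_n / s² → 0`. -/

open MeasureTheory ProbabilityTheory Finset Filter

section

variable {α β Ω ι : Type*} [MeasurableSpace α] [MeasurableSpace β] [MeasurableSpace Ω]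

lemma MeasureTheory.MeasurePreserving.integral_comp_of_aestronglyMeasurable {E : Type*}
    [NormedAddCommGroup E] [NormedSpace ℝ E] {μ : Measure α} {ν : Measure β} {f : α → β}
    (hf : MeasurePreserving f μ ν) {h : β → E}
    (hh : AEStronglyMeasurable h ν) : ∫ x, h (f x) ∂μ = ∫ y, h y ∂ν := by
  rw [← integral_map hf.measurable.aemeasurable (hf.map_eq ▸ hh), hf.map_eq]

lemma integral_prod_eq_zero_of_ae_integral_eq_zero {μ : Measure α} {ν : Measure β} [SFinite ν]
    [SFinite μ] {g : α → β → ℝ} (hg : Integrable (fun p : α × β => g p.1 p.2) (μ.prod ν))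
    (hdeg : ∀ᵐ x ∂μ, ∫ y, g x y ∂ν = 0) :
    ∫ p, g p.1 p.2 ∂(μ.prod ν) = 0 := by
  rw [integral_prod _ hg, integral_congr_ae hdeg, integral_zero]

lemma integral_sq_sum_eq_sum_integral_sq {κ : Type*} {P : Measure Ω} {s : Finset κ}
    {X : κ → Ω → ℝ} (hX : ∀ p ∈ s, MemLp (X p) 2 P)
    (horth : ∀ p ∈ s, ∀ q ∈ s, p ≠ q → ∫ ω, X p ω * X q ω ∂P = 0) :
    ∫ ω, (∑ p ∈ s, X p ω) ^ 2 ∂P = ∑ p ∈ s, ∫ ω, X p ω ^ 2 ∂P := by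
  have hint : ∀ p ∈ s, ∀ q ∈ s, Integrable (fun ω => X p ω * X q ω) P :=
    fun p hp q hq => (hX p hp).integrable_mul (hX q hq)
  simp_rw [sq, Finset.sum_mul_sum]
  rw [integral_finsetSum _ fun p hp => integrable_finsetSum _ (hint p hp)]
  refine Finset.sum_congr rfl fun p hp => ?_
  rw [integral_finsetSum _ (hint p hp),
    Finset.sum_eq_single_of_mem p hp fun q hq hqp => horth p hp q hq hqp.symm]

lemma measure_le_abs_le_ofReal_integral_sq_div {P : Measure Ω} [IsFiniteMeasure P] {X : Ω → ℝ}
    (hX : MemLp X 2 P) {c : ℝ} (hc : 0 < c) :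
    P {ω | c ≤ |X ω|} ≤ ENNReal.ofReal ((∫ ω, X ω ^ 2 ∂P) / c ^ 2) := by
  have hset : {ω | c ≤ |X ω|} = {ω | c ^ 2 ≤ X ω ^ 2} := by
    ext ω
    rw [Set.mem_ofPred_eq, Set.mem_ofPred_eq, ← sq_abs (X ω), sq_le_sq₀ hc.le (abs_nonneg _)]
  rw [hset, ← ofReal_measureReal]
  refine ENNReal.ofReal_le_ofReal ?_
  rw [le_div_iff₀ (by positivity), mul_comm]
  exact mul_meas_ge_le_integral_of_nonneg (ae_of_all _ fun ω => sq_nonneg _) hX.integrable_sq _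

section Kernel

variable {μ : Measure α} [IsProbabilityMeasure μ] {g : α → α → ℝ}

lemma integrable_kernel_mul_kernel_prod (hg : MemLp (fun p : α × α => g p.1 p.2) 2 (μ.prod μ)) :
    Integrable (fun p : α × α × α => g p.1 p.2.1 * g p.1 p.2.2) (μ.prod (μ.prod μ)) :=
  (hg.comp_measurePreserving ((MeasurePreserving.id μ).prod measurePreserving_fst)).integrable_mul
    (hg.comp_measurePreserving ((MeasurePreserving.id μ).prod measurePreserving_snd))

lemma integral_kernel_mul_kernel_prod_eq_zero
    (hg : MemLp (fun p : α × α => g p.1 p.2) 2 (μ.prod μ)) (hdeg : ∀ᵐ x ∂μ, ∫ y, g x y ∂μ = 0) :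
    ∫ p : α × α × α, g p.1 p.2.1 * g p.1 p.2.2 ∂(μ.prod (μ.prod μ)) = 0 := by
  refine integral_prod_eq_zero_of_ae_integral_eq_zero (g := fun x (q : α × α) => g x q.1 * g x q.2)
    (integrable_kernel_mul_kernel_prod hg) ?_
  filter_upwards [hdeg] with x hx
  rw [integral_prod_mul (g x) (g x), hx, zero_mul]

end Kernel

section IID

variable {P : Measure Ω} [IsProbabilityMeasure P] {μ : Measure α} {ε : ι → Ω → α}

lemma ProbabilityTheory.iIndepFun.measurePreserving_prodMk (hindep : iIndepFun ε P)
    (hε : ∀ i, Measurable (ε i)) (hlaw : ∀ i, P.map (ε i) = μ) {i j : ι} (hij : i ≠ j) :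
    MeasurePreserving (fun ω => (ε i ω, ε j ω)) P (μ.prod μ) := by
  refine ⟨(hε i).prodMk (hε j), ?_⟩
  rw [(indepFun_iff_map_prod_eq_prod_map_map (hε i).aemeasurable (hε j).aemeasurable).1
    (hindep.indepFun hij), hlaw, hlaw]

lemma ProbabilityTheory.iIndepFun.measurePreserving_prodMk_prodMk (hindep : iIndepFun ε P)
    (hε : ∀ i, Measurable (ε i)) (hlaw : ∀ i, P.map (ε i) = μ) {i j k : ι} (hij : i ≠ j)
    (hik : i ≠ k) (hjk : j ≠ k) :
    MeasurePreserving (fun ω => (ε i ω, ε j ω, ε k ω)) P (μ.prod (μ.prod μ)) := by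
  have hjk' := hindep.measurePreserving_prodMk hε hlaw hjk
  refine ⟨(hε i).prodMk hjk'.measurable, ?_⟩
  rw [(indepFun_iff_map_prod_eq_prod_map_map (hε i).aemeasurable hjk'.measurable.aemeasurable).1
    (hindep.indepFun_prodMk hε j k i hij.symm hik.symm).symm, hlaw, hjk'.map_eq]

variable {g : α → α → ℝ}

lemma memLp_kernel (hindep : iIndepFun ε P) (hε : ∀ i, Measurable (ε i))
    (hlaw : ∀ i, P.map (ε i) = μ) (hg : MemLp (fun p : α × α => g p.1 p.2) 2 (μ.prod μ))
    {i j : ι} (hij : i ≠ j) : MemLp (fun ω => g (ε i ω) (ε j ω)) 2 P :=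
  hg.comp_measurePreserving (hindep.measurePreserving_prodMk hε hlaw hij)

variable [IsProbabilityMeasure μ]

lemma integral_kernel_mul_kernel_eq_zero_of_fst_eq (hindep : iIndepFun ε P)
    (hε : ∀ i, Measurable (ε i)) (hlaw : ∀ i, P.map (ε i) = μ)
    (hg : MemLp (fun p : α × α => g p.1 p.2) 2 (μ.prod μ)) (hdeg : ∀ᵐ x ∂μ, ∫ y, g x y ∂μ = 0)
    {i j k : ι} (hij : i ≠ j) (hik : i ≠ k) (hjk : j ≠ k) :
    ∫ ω, g (ε i ω) (ε j ω) * g (ε i ω) (ε k ω) ∂P = 0 :=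
  ((hindep.measurePreserving_prodMk_prodMk hε hlaw hij hik hjk
    ).integral_comp_of_aestronglyMeasurable
      (integrable_kernel_mul_kernel_prod hg).aestronglyMeasurable).trans
    (integral_kernel_mul_kernel_prod_eq_zero hg hdeg)

lemma integral_kernel_mul_kernel_eq_zero_of_disjoint (hindep : iIndepFun ε P)
    (hε : ∀ i, Measurable (ε i)) (hlaw : ∀ i, P.map (ε i) = μ)
    (hg : MemLp (fun p : α × α => g p.1 p.2) 2 (μ.prod μ)) (hdeg : ∀ᵐ x ∂μ, ∫ y, g x y ∂μ = 0)
    {i j k l : ι} (hij : i ≠ j) (hkl : k ≠ l) (hik : i ≠ k) (hil : i ≠ l) (hjk : j ≠ k)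
    (hjl : j ≠ l) :
    ∫ ω, g (ε i ω) (ε j ω) * g (ε k ω) (ε l ω) ∂P = 0 := by
  have hmean : ∫ ω, g (ε i ω) (ε j ω) ∂P = 0 :=
    ((hindep.measurePreserving_prodMk hε hlaw hij).integral_comp_of_aestronglyMeasurable
      hg.aestronglyMeasurable).trans
      (integral_prod_eq_zero_of_ae_integral_eq_zero (hg.integrable one_le_two) hdeg)
  have hkl' := hindep.measurePreserving_prodMk hε hlaw hkl
  rw [(hindep.indepFun_prodMk_prodMk hε i j k l hik hil hjk hjl).integral_fun_comp_mul_comp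
    (f := fun p => g p.1 p.2) (g := fun p => g p.1 p.2)
    (hindep.measurePreserving_prodMk hε hlaw hij).measurable.aemeasurable
    hkl'.measurable.aemeasurable
    ((hindep.measurePreserving_prodMk hε hlaw hij).map_eq ▸ hg.aestronglyMeasurable)
    (hkl'.map_eq ▸ hg.aestronglyMeasurable), hmean, zero_mul]

lemma integral_kernel_mul_kernel_eq_zero (hindep : iIndepFun ε P)
    (hε : ∀ i, Measurable (ε i)) (hlaw : ∀ i, P.map (ε i) = μ)
    (hg : MemLp (fun p : α × α => g p.1 p.2) 2 (μ.prod μ))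
    (hdeg₁ : ∀ᵐ x ∂μ, ∫ y, g x y ∂μ = 0) (hdeg₂ : ∀ᵐ y ∂μ, ∫ x, g x y ∂μ = 0)
    {i j k l : ι} (hij : i ≠ j) (hkl : k ≠ l) (hil : i ≠ l) (hjk : j ≠ k) (hne : (i, j) ≠ (k, l)) :
    ∫ ω, g (ε i ω) (ε j ω) * g (ε k ω) (ε l ω) ∂P = 0 := by
  by_cases hik : i = k
  · subst hik
    exact integral_kernel_mul_kernel_eq_zero_of_fst_eq hindep hε hlaw hg hdeg₁ hij hkl
      fun hjl => hne (by rw [hjl])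
  by_cases hjl : j = l
  · subst hjl
    -- the transposed kernel shares its first argument
    exact integral_kernel_mul_kernel_eq_zero_of_fst_eq (g := fun x y => g y x) hindep hε hlaw
      (hg.comp_measurePreserving Measure.measurePreserving_swap) hdeg₂ hij.symm hjk hik
  exact integral_kernel_mul_kernel_eq_zero_of_disjoint hindep hε hlaw hg hdeg₁ hij hkl hik hil
    hjk hjl

lemma integral_sq_sum_sum_kernel (hindep : iIndepFun ε P)
    (hε : ∀ i, Measurable (ε i)) (hlaw : ∀ i, P.map (ε i) = μ)
    (hg : MemLp (fun p : α × α => g p.1 p.2) 2 (μ.prod μ))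
    (hdeg₁ : ∀ᵐ x ∂μ, ∫ y, g x y ∂μ = 0) (hdeg₂ : ∀ᵐ y ∂μ, ∫ x, g x y ∂μ = 0)
    {I J : Finset ι} (hIJ : Disjoint I J) :
    ∫ ω, (∑ i ∈ I, ∑ j ∈ J, g (ε i ω) (ε j ω)) ^ 2 ∂P
      = #I * #J * ∫ p, g p.1 p.2 ^ 2 ∂(μ.prod μ) := by
  have hIJ' := disjoint_iff_ne.1 hIJ
  have hne : ∀ p ∈ I ×ˢ J, p.1 ≠ p.2 := fun p hp =>
    hIJ' _ (mem_product.1 hp).1 _ (mem_product.1 hp).2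
  simp_rw [← Finset.sum_product']
  rw [integral_sq_sum_eq_sum_integral_sq (fun p hp => memLp_kernel hindep hε hlaw hg (hne p hp))
    fun p hp q hq hpq => integral_kernel_mul_kernel_eq_zero hindep hε hlaw hg hdeg₁ hdeg₂
      (hne p hp) (hne q hq) (hIJ' _ (mem_product.1 hp).1 _ (mem_product.1 hq).2)
      (hIJ' _ (mem_product.1 hq).1 _ (mem_product.1 hp).2).symm hpq,
    Finset.sum_congr rfl fun p hp => (hindep.measurePreserving_prodMk hε hlaw (hne p hp)
      ).integral_comp_of_aestronglyMeasurable hg.integrable_sq.aestronglyMeasurable,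
    sum_const, card_product, nsmul_eq_mul, Nat.cast_mul]

lemma measure_le_abs_sum_sum_kernel_le (hindep : iIndepFun ε P)
    (hε : ∀ i, Measurable (ε i)) (hlaw : ∀ i, P.map (ε i) = μ)
    (hg : MemLp (fun p : α × α => g p.1 p.2) 2 (μ.prod μ))
    (hdeg₁ : ∀ᵐ x ∂μ, ∫ y, g x y ∂μ = 0) (hdeg₂ : ∀ᵐ y ∂μ, ∫ x, g x y ∂μ = 0)
    {I J : Finset ι} (hIJ : Disjoint I J) {c : ℝ} (hc : 0 < c) :
    P {ω | c ≤ |∑ i ∈ I, ∑ j ∈ J, g (ε i ω) (ε j ω)|}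
      ≤ ENNReal.ofReal (#I * #J * (∫ p, g p.1 p.2 ^ 2 ∂(μ.prod μ)) / c ^ 2) := by
  have hS : MemLp (fun ω => ∑ i ∈ I, ∑ j ∈ J, g (ε i ω) (ε j ω)) 2 P :=
    memLp_finsetSum _ fun i hi => memLp_finsetSum _ fun j hj =>
      memLp_kernel hindep hε hlaw hg (disjoint_iff_ne.1 hIJ i hi j hj)
  rw [← integral_sq_sum_sum_kernel hindep hε hlaw hg hdeg₁ hdeg₂ hIJ]
  exact measure_le_abs_le_ofReal_integral_sq_div hS hc

end IID

lemma measure_exists_le_abs_partialSum_le {P : Measure Ω} [IsProbabilityMeasure P]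
    {μ : Measure α} [IsProbabilityMeasure μ] {ε : ℕ → Ω → α} {g : α → α → ℝ}
    (hindep : iIndepFun ε P) (hε : ∀ i, Measurable (ε i)) (hlaw : ∀ i, P.map (ε i) = μ)
    (hg : MemLp (fun p : α × α => g p.1 p.2) 2 (μ.prod μ))
    (hdeg₁ : ∀ᵐ x ∂μ, ∫ y, g x y ∂μ = 0) (hdeg₂ : ∀ᵐ y ∂μ, ∫ x, g x y ∂μ = 0)
    {n T : ℕ} (hn : 1 ≤ n) (hT : T ≤ n) {s : ℝ} (hs : 0 < s) :
    P {ω | ∃ l, 1 ≤ l ∧ l ≤ T ∧ s ≤ (n : ℝ) ^ (-(3:ℝ)/2) *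
        |∑ i ∈ Icc 1 l, ∑ j ∈ Icc (T + 1) n, g (ε i ω) (ε j ω)|}
      ≤ ENNReal.ofReal ((∫ p, g p.1 p.2 ^ 2 ∂(μ.prod μ)) / s ^ 2) := by
  set m := ∫ p, g p.1 p.2 ^ 2 ∂(μ.prod μ)
  set a : ℝ := (n : ℝ) ^ (-(3:ℝ)/2)
  set S : ℕ → Ω → ℝ := fun l ω => ∑ i ∈ Icc 1 l, ∑ j ∈ Icc (T + 1) n, g (ε i ω) (ε j ω)
  have hnpos : (0:ℝ) < n := by exact_mod_cast hn
  have ha : 0 < a := Real.rpow_pos_of_pos hnpos _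
  have ha2 : a ^ 2 = ((n : ℝ) ^ 3)⁻¹ := by
    rw [← Real.rpow_mul_natCast hnpos.le, show -(3:ℝ) / 2 * (2:ℕ) = -(3:ℕ) by norm_num,
      Real.rpow_neg hnpos.le, Real.rpow_natCast]
  have hterm : ∀ l ∈ Icc 1 T, P {ω | s / a ≤ |S l ω|} ≤ ENNReal.ofReal (m / n / s ^ 2) := by
    intro l hl
    have hdisj : Disjoint (Icc 1 l) (Icc (T + 1) n) :=
      disjoint_left.2 fun i hi hi' => by rw [mem_Icc] at hi hi' hl; omega
    refine (measure_le_abs_sum_sum_kernel_le hindep hε hlaw hg hdeg₁ hdeg₂ hdisj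
      (div_pos hs ha)).trans (ENNReal.ofReal_le_ofReal ?_)
    rw [Nat.card_Icc, Nat.card_Icc, div_pow, ha2, div_inv_eq_mul]
    calc ((l + 1 - 1 : ℕ) : ℝ) * ((n + 1 - (T + 1) : ℕ) : ℝ) * m / (s ^ 2 * n ^ 3)
        ≤ n * n * m / (s ^ 2 * n ^ 3) := by rw [mem_Icc] at hl; gcongr <;> omega
      _ = m / n / s ^ 2 := by field_simp
  calc P {ω | ∃ l, 1 ≤ l ∧ l ≤ T ∧ s ≤ a * |S l ω|}
      ≤ P (⋃ l ∈ Icc 1 T, {ω | s / a ≤ |S l ω|}) :=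
        measure_mono fun ω ⟨l, h1, h2, h⟩ =>
          Set.mem_biUnion (mem_Icc.2 ⟨h1, h2⟩) ((div_le_iff₀' ha).2 h)
    _ ≤ ∑ l ∈ Icc 1 T, P {ω | s / a ≤ |S l ω|} := measure_biUnion_finset_le _ _
    _ ≤ ∑ l ∈ Icc 1 T, ENNReal.ofReal (m / n / s ^ 2) := sum_le_sum hterm
    _ ≤ n * ENNReal.ofReal (m / n / s ^ 2) := by
        rw [sum_const, Nat.card_Icc, nsmul_eq_mul]
        gcongr
        exact_mod_cast (by omega : T + 1 - 1 ≤ n)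
    _ = ENNReal.ofReal (m / s ^ 2) := by
        rw [← ENNReal.ofReal_natCast, ← ENNReal.ofReal_mul hnpos.le]
        congr 1
        field_simp

end

theorem stmt11_general {Ω : Type*} [MeasurableSpace Ω] (P : Measure Ω) [IsProbabilityMeasure P]
    (ε : ℕ → Ω → ℝ) (hεm : ∀ i, Measurable (ε i))
    (hindep : iIndepFun ε P)
    (μ : Measure ℝ) (hlaw : ∀ i, P.map (ε i) = μ)
    (τ : ℝ) (hτ : τ ∈ Set.Ioo (0:ℝ) 1)
    (v : ℕ → ℝ) (hv : Tendsto v atTop (nhds 0))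
    (C : ℝ)
    (g : ℕ → ℝ → ℝ → ℝ) (hg : ∀ n, Measurable fun p : ℝ × ℝ => g n p.1 p.2)
    (hL2 : ∀ n, Integrable (fun ω => (g n (ε 1 ω) (ε 2 ω)) ^ 2) P)
    (hdeg1 : ∀ n, ∀ᵐ x ∂μ, ∫ y, g n x y ∂μ = 0)
    (hdeg2 : ∀ n, ∀ᵐ y ∂μ, ∫ x, g n x y ∂μ = 0)
    (hbound : ∀ n, ∫ ω, (g n (ε 1 ω) (ε 2 ω)) ^ 2 ∂P ≤ C * v n) :
    ∀ s : ℝ, 0 < s →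
      Tendsto
        (fun n : ℕ =>
          P {ω | ∃ l, 1 ≤ l ∧ l ≤ ⌊(n : ℝ) * τ⌋₊ ∧
            s ≤ (n : ℝ) ^ (-(3:ℝ)/2) *
              |∑ i ∈ Finset.Icc 1 l, ∑ j ∈ Finset.Icc (⌊(n : ℝ) * τ⌋₊ + 1) n,
                g n (ε i ω) (ε j ω)|})
        atTop (nhds 0) := by
  intro s hs
  have : IsProbabilityMeasure μ := hlaw 0 ▸ Measure.isProbabilityMeasure_map (hεm 0).aemeasurable
  have hpair := hindep.measurePreserving_prodMk hεm hlaw (by norm_num : (1 : ℕ) ≠ 2)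
  have hgL2 : ∀ n, MemLp (fun p : ℝ × ℝ => g n p.1 p.2) 2 (μ.prod μ) := fun n =>
    (memLp_two_iff_integrable_sq (hg n).aestronglyMeasurable).2
      ((hpair.integrable_comp ((hg n).pow_const 2).aestronglyMeasurable).1 (hL2 n))
  have hmoment : ∀ n, ∫ p, g n p.1 p.2 ^ 2 ∂(μ.prod μ) ≤ C * v n := fun n =>
    (hpair.integral_comp_of_aestronglyMeasurable (hgL2 n).integrable_sq.aestronglyMeasurable)
      ▸ hbound n
  have hlim : Tendsto (fun n => ENNReal.ofReal (C * v n / s ^ 2)) atTop (nhds 0) := by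
    simpa using ENNReal.tendsto_ofReal ((hv.const_mul C).div_const (s ^ 2))
  refine tendsto_of_tendsto_of_tendsto_of_le_of_le' tendsto_const_nhds hlim
    (Eventually.of_forall fun _ => zero_le) ?_
  filter_upwards [eventually_ge_atTop 1] with n hn
  have hT : ⌊(n : ℝ) * τ⌋₊ ≤ n := Nat.floor_le_of_le (mul_le_of_le_one_right n.cast_nonneg hτ.2.le)
  refine (measure_exists_le_abs_partialSum_le hindep hεm hlaw (hgL2 n) (hdeg1 n) (hdeg2 n) hn hT
    hs).trans (ENNReal.ofReal_le_ofReal ?_)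
  gcongr
  exact hmoment n

/-- For i.i.d. `ε_i` and a sequence of completely degenerate kernels `g_n` with
`E[g_n(ε_1,ε_2)²] ≤ C·v_n → 0`, the maximum over `1 ≤ l ≤ ⌊nτ⌋` of
`n^{−3/2} |Σ_{i=1}^l Σ_{j=⌊nτ⌋+1}^n g_n(ε_i,ε_j)|` tends to `0` in probability. -/
theorem stmt11 {Ω : Type*} [MeasurableSpace Ω] (P : Measure Ω) [IsProbabilityMeasure P]
    (ε : ℕ → Ω → ℝ) (hεm : ∀ i, Measurable (ε i))
    (hindep : iIndepFun ε P)
    (μ : Measure ℝ) (hlaw : ∀ i, P.map (ε i) = μ)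
    (τ : ℝ) (hτ : τ ∈ Set.Ioo (0:ℝ) 1)
    (v : ℕ → ℝ) (hv_pos : ∀ n, 0 < v n) (hv : Tendsto v atTop (nhds 0))
    (C : ℝ) (hC : 0 < C)
    (g : ℕ → ℝ → ℝ → ℝ) (hg : ∀ n, Measurable fun p : ℝ × ℝ => g n p.1 p.2)
    (hL2 : ∀ n, Integrable (fun ω => (g n (ε 1 ω) (ε 2 ω)) ^ 2) P)
    (hdeg1 : ∀ n, ∀ᵐ x ∂μ, ∫ y, g n x y ∂μ = 0)
    (hdeg2 : ∀ n, ∀ᵐ y ∂μ, ∫ x, g n x y ∂μ = 0)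
    (hbound : ∀ n, ∫ ω, (g n (ε 1 ω) (ε 2 ω)) ^ 2 ∂P ≤ C * v n) :
    ∀ s : ℝ, 0 < s →
      Tendsto
        (fun n : ℕ =>
          P {ω | ∃ l, 1 ≤ l ∧ l ≤ ⌊(n : ℝ) * τ⌋₊ ∧
            s ≤ (n : ℝ) ^ (-(3:ℝ)/2) *
              |∑ i ∈ Finset.Icc 1 l, ∑ j ∈ Finset.Icc (⌊(n : ℝ) * τ⌋₊ + 1) n,
                g n (ε i ω) (ε j ω)|})
        atTop (nhds 0) :=
  stmt11_general P ε hεm hindep μ hlaw τ hτ v hv C g hg hL2 hdeg1 hdeg2 hbound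
end
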